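/- arXiv:1510.00447 — 7 statements merged into one kernel-verified Lean document; each statement's English description precedes it below -/
import Mathlib

section
/- For every λ > 0, η > 0 and t > 0, there is a constant C depending only on λ such that for every integer k, (t k²)^λ · exp(η(|k| − k²) t) ≤ C (t^λ + η^{−λ}) exp((η/8)(t + t^{1/2} √(t + 16λ/η))). -/
lemma rpow_mul_exp_neg_le (lam : ℝ) (hlam : 0 < lam) (y a : ℝ) (hy : 0 ≤ y) (ha : 0 < a) :
    y ^ lam * Real.exp (-(a * y)) ≤ (lam / a) ^ lam := by
  have hz : 0 ≤ a * y / lam := by positivity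
  have h1 : a * y / lam ≤ Real.exp (a * y / lam) :=
    le_trans (by linarith) (Real.add_one_le_exp _)
  have h2 : (a * y / lam) ^ lam ≤ Real.exp (a * y) := by
    calc (a * y / lam) ^ lam ≤ (Real.exp (a * y / lam)) ^ lam :=
          Real.rpow_le_rpow hz h1 hlam.le
      _ = Real.exp (a * y) := by
          rw [← Real.exp_mul, div_mul_cancel₀ _ hlam.ne']
  have hy' : y = (lam / a) * (a * y / lam) := by field_simp
  have h3 : y ^ lam ≤ (lam / a) ^ lam * Real.exp (a * y) := by
    calc y ^ lam = ((lam / a) * (a * y / lam)) ^ lam := by rw [← hy']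
      _ = (lam / a) ^ lam * (a * y / lam) ^ lam :=
          Real.mul_rpow (by positivity) hz
      _ ≤ (lam / a) ^ lam * Real.exp (a * y) :=
          mul_le_mul_of_nonneg_left h2 (by positivity)
  calc y ^ lam * Real.exp (-(a * y))
      ≤ ((lam / a) ^ lam * Real.exp (a * y)) * Real.exp (-(a * y)) :=
        mul_le_mul_of_nonneg_right h3 (Real.exp_nonneg _)
    _ = (lam / a) ^ lam * (Real.exp (a * y) * Real.exp (-(a * y))) := by ring
    _ = (lam / a) ^ lam := by rw [← Real.exp_add, add_neg_cancel, Real.exp_zero, mul_one]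

/-- For every λ > 0 there is a constant C = C(λ) > 0 such that for all
η > 0, t > 0 and every integer k,
`(t k²)^λ e^{η(|k|−k²)t} ≤ C (t^λ + η^{−λ}) e^{(η/8)(t + √t √(t+16λ/η))}`. -/
theorem stmt1 (lam : ℝ) (hlam : 0 < lam) :
    ∃ C > (0:ℝ), ∀ (eta t : ℝ), 0 < eta → 0 < t → ∀ k : ℤ,
      (t * (k:ℝ) ^ 2) ^ lam * Real.exp (eta * (|(k:ℝ)| - (k:ℝ) ^ 2) * t) ≤
        C * (t ^ lam + eta ^ (-lam)) *
          Real.exp (eta / 8 * (t + Real.sqrt t * Real.sqrt (t + 16 * lam / eta))) := by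
  refine ⟨(2 * lam) ^ lam + 1, by positivity, ?_⟩
  intro eta t heta ht k
  have hexp1 : (1:ℝ) ≤ Real.exp (eta / 8 * (t + Real.sqrt t * Real.sqrt (t + 16 * lam / eta))) := by
    apply Real.one_le_exp
    have h1 : 0 ≤ Real.sqrt t * Real.sqrt (t + 16 * lam / eta) := by positivity
    positivity
  have hC0 : (0:ℝ) ≤ (2 * lam) ^ lam := Real.rpow_nonneg (by positivity) _
  have htl : (0:ℝ) ≤ t ^ lam := Real.rpow_nonneg ht.le _
  have hel : (0:ℝ) ≤ eta ^ (-lam) := Real.rpow_nonneg heta.le _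
  have key : (t * (k:ℝ) ^ 2) ^ lam * Real.exp (eta * (|(k:ℝ)| - (k:ℝ) ^ 2) * t) ≤
      ((2 * lam) ^ lam + 1) * (t ^ lam + eta ^ (-lam)) := by
    set x := |(k:ℝ)| with hxdef
    have hx0 : 0 ≤ x := abs_nonneg _
    have hxsq : (k:ℝ) ^ 2 = x ^ 2 := (sq_abs _).symm
    rw [hxsq]
    rcases eq_or_ne k 0 with hk | hk
    · subst hk
      simp only [Int.cast_zero, abs_zero, hxdef]
      rw [show ((0:ℝ))^2 = 0 by norm_num, mul_zero, Real.zero_rpow hlam.ne', zero_mul]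
      positivity
    · rcases eq_or_lt_of_le (Int.one_le_abs (by exact_mod_cast hk)) with h1 | h2
      · -- |k| = 1
        have hx1 : x = 1 := by
          rw [hxdef, ← Int.cast_abs, ← h1, Int.cast_one]
        rw [hx1]
        norm_num
        calc t ^ lam ≤ t ^ lam + eta ^ (-lam) := le_add_of_nonneg_right hel
          _ = 1 * (t ^ lam + eta ^ (-lam)) := (one_mul _).symm
          _ ≤ ((2 * lam) ^ lam + 1) * (t ^ lam + eta ^ (-lam)) := by
              apply mul_le_mul_of_nonneg_right _ (by positivity)
              linarith
      · -- |k| ≥ 2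
        have hx2 : (2:ℝ) ≤ x := by
          rw [hxdef, ← Int.cast_abs]
          exact_mod_cast h2
        have hfac : x - x ^ 2 ≤ -(x ^ 2 / 2) := by nlinarith
        have hexp : eta * (x - x ^ 2) * t ≤ -(eta / 2 * (t * x ^ 2)) := by
          nlinarith [mul_pos heta ht, mul_le_mul_of_nonneg_left hfac (mul_pos heta ht).le]
        have hbd : (t * x ^ 2) ^ lam * Real.exp (eta * (x - x ^ 2) * t) ≤
            (lam / (eta / 2)) ^ lam := by
          calc (t * x ^ 2) ^ lam * Real.exp (eta * (x - x ^ 2) * t)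
              ≤ (t * x ^ 2) ^ lam * Real.exp (-(eta / 2 * (t * x ^ 2))) := by
                apply mul_le_mul_of_nonneg_left (Real.exp_le_exp.mpr hexp)
                  (Real.rpow_nonneg (by positivity) _)
            _ ≤ (lam / (eta / 2)) ^ lam :=
                rpow_mul_exp_neg_le lam hlam _ _ (by positivity) (by positivity)
        have heq : (lam / (eta / 2)) ^ lam = (2 * lam) ^ lam * eta ^ (-lam) := by
          rw [show lam / (eta / 2) = 2 * lam / eta by ring,
            Real.div_rpow (by positivity) heta.le, Real.rpow_neg heta.le, div_eq_mul_inv]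
        calc (t * x ^ 2) ^ lam * Real.exp (eta * (x - x ^ 2) * t)
            ≤ (2 * lam) ^ lam * eta ^ (-lam) := heq ▸ hbd
          _ ≤ ((2 * lam) ^ lam + 1) * (t ^ lam + eta ^ (-lam)) := by nlinarith
  calc (t * (k:ℝ) ^ 2) ^ lam * Real.exp (eta * (|(k:ℝ)| - (k:ℝ) ^ 2) * t)
      ≤ ((2 * lam) ^ lam + 1) * (t ^ lam + eta ^ (-lam)) := key
    _ = ((2 * lam) ^ lam + 1) * (t ^ lam + eta ^ (-lam)) * 1 := (mul_one _).symm
    _ ≤ ((2 * lam) ^ lam + 1) * (t ^ lam + eta ^ (-lam)) *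
          Real.exp (eta / 8 * (t + Real.sqrt t * Real.sqrt (t + 16 * lam / eta))) :=
        mul_le_mul_of_nonneg_left hexp1 (by positivity)
end

section
/- For every λ ≥ 0, η > 0 and t > 0, the ℓ²(ℤ) norm of the sequence k ↦ |k|^λ e^{η(|k|−k²)t} is bounded by C(λ) · (1 + (ηt)^{−λ/2} + (ηt)^{−(1+2λ)/4}), where C(λ) depends only on λ. -/
private lemma aux_sqrt_add {x y : ℝ} (hx : 0 ≤ x) (hy : 0 ≤ y) :
    Real.sqrt (x + y) ≤ Real.sqrt x + Real.sqrt y := by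
  have h : x + y ≤ (Real.sqrt x + Real.sqrt y) ^ 2 := by
    have hx' := Real.sq_sqrt hx
    have hy' := Real.sq_sqrt hy
    have h1 : 0 ≤ Real.sqrt x * Real.sqrt y := by positivity
    nlinarith
  calc Real.sqrt (x + y) ≤ Real.sqrt ((Real.sqrt x + Real.sqrt y) ^ 2) := Real.sqrt_le_sqrt h
    _ = Real.sqrt x + Real.sqrt y := by
        rw [Real.sqrt_sq (by positivity)]


private lemma aux_sqrt_rpow {a : ℝ} (ha : 0 < a) (p : ℝ) :
    Real.sqrt (a ^ p) = a ^ (p / 2) := by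
  rw [Real.sqrt_eq_rpow, ← Real.rpow_mul ha.le]
  congr 1
  ring

private lemma aux_rpow_exp {lam u : ℝ} (hlam : 0 ≤ lam) (hu : 0 ≤ u) :
    u ^ lam ≤ lam ^ lam * Real.exp u := by
  rcases eq_or_lt_of_le hlam with h0 | h0
  · rw [← h0]
    simp only [Real.rpow_zero, one_mul]
    exact Real.one_le_exp hu
  rcases eq_or_lt_of_le hu with hu0 | hu0
  · rw [← hu0, Real.zero_rpow (ne_of_gt h0)]
    positivity
  have hlog : Real.log (u / lam) ≤ u / lam - 1 := Real.log_le_sub_one_of_pos (by positivity)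
  have hlog2 : lam * Real.log (u / lam) ≤ u - lam := by
    have := mul_le_mul_of_nonneg_left hlog hlam
    rw [mul_sub, mul_one, mul_div_cancel₀ _ (ne_of_gt h0)] at this
    linarith
  rw [Real.log_div (ne_of_gt hu0) (ne_of_gt h0), mul_sub] at hlog2
  rw [Real.rpow_def_of_pos hu0, Real.rpow_def_of_pos h0, ← Real.exp_add]
  apply Real.exp_le_exp.2
  nlinarith

private lemma aux_summable_exp {c : ℝ} (hc : 0 < c) :
    Summable (fun n : ℕ => Real.exp (-(c * ((n : ℝ) + 1)))) := by
  have key : ∀ n : ℕ, Real.exp (-(c * ((n : ℝ) + 1))) = Real.exp (-c) ^ n * Real.exp (-c) := by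
    intro n
    rw [← Real.exp_nat_mul, ← Real.exp_add]
    congr 1
    ring
  have hs : Summable (fun n : ℕ => Real.exp (-c) ^ n * Real.exp (-c)) :=
    (summable_geometric_of_lt_one (Real.exp_pos _).le
      (Real.exp_lt_one_iff.2 (by linarith))).mul_right _
  exact hs.congr (fun n => (key n).symm)

private lemma aux_geom_bound {c : ℝ} (hc : 0 < c) :
    ∑' n : ℕ, Real.exp (-(c * ((n : ℝ) + 1))) ≤ 1 / c := by
  have key : ∀ n : ℕ, Real.exp (-(c * ((n : ℝ) + 1))) = Real.exp (-c) ^ n * Real.exp (-c) := by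
    intro n
    rw [← Real.exp_nat_mul, ← Real.exp_add]
    congr 1
    ring
  set r := Real.exp (-c) with hr
  have hr0 : 0 ≤ r := (Real.exp_pos _).le
  have hr1 : r < 1 := Real.exp_lt_one_iff.2 (by linarith)
  have : ∑' n : ℕ, Real.exp (-(c * ((n : ℝ) + 1))) = (1 - r)⁻¹ * r := by
    rw [tsum_congr key, tsum_mul_right, tsum_geometric_of_lt_one hr0 hr1]
  rw [this]
  have hexp : c + 1 ≤ Real.exp c := Real.add_one_le_exp c
  have hrexp : r * Real.exp c = 1 := by
    rw [hr, ← Real.exp_add]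
    simp
  have h1r : 0 < 1 - r := by linarith
  rw [inv_mul_le_iff₀ h1r, mul_one_div, le_div_iff₀ hc]
  nlinarith [Real.exp_pos c]

private lemma aux_summable_exp_sq {c : ℝ} (hc : 0 < c) :
    Summable (fun n : ℕ => Real.exp (-(c * ((n : ℝ) + 1) ^ 2))) := by
  apply Summable.of_nonneg_of_le (fun n => (Real.exp_pos _).le) _ (aux_summable_exp hc)
  intro n
  apply Real.exp_le_exp.2
  have hn0 : (0:ℝ) ≤ (n : ℝ) := Nat.cast_nonneg n
  nlinarith [mul_nonneg hc.le hn0, mul_nonneg (mul_nonneg hc.le hn0) hn0]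

private lemma aux_gauss_bound {c : ℝ} (hc : 0 < c) :
    ∑' n : ℕ, Real.exp (-(c * ((n : ℝ) + 1) ^ 2)) ≤ 1 + 2 / Real.sqrt c := by
  set s := Real.sqrt c with hs
  have hs0 : 0 < s := Real.sqrt_pos.2 hc
  have hss : s * s = c := Real.mul_self_sqrt hc.le
  obtain ⟨N, hNle, hNlt⟩ : ∃ N : ℕ, 1 / s ≤ (N : ℝ) ∧ (N : ℝ) < 1 / s + 1 :=
    ⟨⌈1 / s⌉₊, Nat.le_ceil _, Nat.ceil_lt_add_one (by positivity)⟩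
  have hsumm := aux_summable_exp_sq hc
  rw [← Summable.sum_add_tsum_nat_add N hsumm]
  have head : ∑ i ∈ Finset.range N, Real.exp (-(c * ((i : ℝ) + 1) ^ 2)) ≤ (N : ℝ) := by
    calc ∑ i ∈ Finset.range N, Real.exp (-(c * ((i : ℝ) + 1) ^ 2))
        ≤ ∑ i ∈ Finset.range N, 1 := by
          apply Finset.sum_le_sum
          intro i _
          rw [← Real.exp_zero]
          apply Real.exp_le_exp.2
          have : (0:ℝ) ≤ ((i : ℝ) + 1) ^ 2 := by positivity
          nlinarith
      _ = (N : ℝ) := by simp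
  have tail : ∑' n : ℕ, Real.exp (-(c * (((n + N : ℕ) : ℝ) + 1) ^ 2)) ≤ 1 / s := by
    have hle : ∀ n : ℕ, Real.exp (-(c * (((n + N : ℕ) : ℝ) + 1) ^ 2))
        ≤ Real.exp (-(s * ((n : ℝ) + 1))) := by
      intro n
      apply Real.exp_le_exp.2
      rw [neg_le_neg_iff]
      push_cast
      have hn0 : (0:ℝ) ≤ (n : ℝ) := Nat.cast_nonneg n
      have hN0 : (0:ℝ) ≤ (N : ℝ) := Nat.cast_nonneg N
      have h1 : ((N : ℝ) + 1) * ((n : ℝ) + 1) ≤ ((n : ℝ) + (N : ℝ) + 1) ^ 2 := by nlinarith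
      have h2 : s * ((n : ℝ) + 1) ≤ c * (((N : ℝ) + 1) * ((n : ℝ) + 1)) := by
        have h3 : s ≤ c * ((N : ℝ) + 1) := by
          have : 1 / s ≤ (N : ℝ) + 1 := by linarith
          calc s = c * (1 / s) := by field_simp; nlinarith
            _ ≤ c * ((N : ℝ) + 1) := by
                apply mul_le_mul_of_nonneg_left this hc.le
        calc s * ((n : ℝ) + 1) ≤ (c * ((N : ℝ) + 1)) * ((n : ℝ) + 1) := by
              apply mul_le_mul_of_nonneg_right h3 (by positivity)
          _ = c * (((N : ℝ) + 1) * ((n : ℝ) + 1)) := by ring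
      calc s * ((n : ℝ) + 1) ≤ c * (((N : ℝ) + 1) * ((n : ℝ) + 1)) := h2
        _ ≤ c * (((n : ℝ) + (N : ℝ) + 1) ^ 2) := by
            apply mul_le_mul_of_nonneg_left h1 hc.le
    calc ∑' n : ℕ, Real.exp (-(c * (((n + N : ℕ) : ℝ) + 1) ^ 2))
        ≤ ∑' n : ℕ, Real.exp (-(s * ((n : ℝ) + 1))) := by
          apply Summable.tsum_le_tsum hle _ (aux_summable_exp hs0)
          exact (summable_nat_add_iff N).2 hsumm
      _ ≤ 1 / s := aux_geom_bound hs0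
  have h2s : 2 / s = 1 / s + 1 / s := by ring
  linarith

set_option maxHeartbeats 1000000 in
/-- For every λ ≥ 0 there is C = C(λ) > 0 such that for all η > 0, t > 0, the
ℓ²(ℤ) norm of `k ↦ |k|^λ e^{η(|k|−k²)t}` is at most
`C (1 + (ηt)^{−λ/2} + (ηt)^{−(1+2λ)/4})`. -/
theorem stmt2 (lam : ℝ) (hlam : 0 ≤ lam) :
    ∃ C > (0:ℝ), ∀ (eta t : ℝ), 0 < eta → 0 < t →
      Real.sqrt (∑' k : ℤ, |(k:ℝ)| ^ (2 * lam) * Real.exp (2 * eta * (|(k:ℝ)| - (k:ℝ) ^ 2) * t)) ≤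
        C * (1 + (eta * t) ^ (-(lam / 2)) + (eta * t) ^ (-((1 + 2 * lam) / 4))) := by
  refine ⟨Real.sqrt 3 + Real.sqrt (2 ^ (lam + 1) * lam ^ lam) +
      Real.sqrt (2 ^ (lam + 2) * Real.sqrt 2 * lam ^ lam), by positivity, ?_⟩
  intro eta t heta ht
  have ha : 0 < eta * t := mul_pos heta ht
  set a := eta * t with haeq
  have ha2 : 0 < a / 2 := by positivity
  have hK0 : (0:ℝ) ≤ 2 ^ lam * lam ^ lam * a ^ (-lam) :=
    mul_nonneg (mul_nonneg (by positivity) (Real.rpow_nonneg hlam _)) (Real.rpow_nonneg ha.le _)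
  set K := 2 ^ lam * lam ^ lam * a ^ (-lam) with hKeq
  -- polynomial absorption
  have hpoly : ∀ x : ℝ, 0 ≤ x → x ^ (2 * lam) ≤ K * Real.exp (a / 2 * x ^ 2) := by
    intro x hx
    have h1 : x ^ (2 * lam) = (x ^ 2) ^ lam := by
      rw [show (2:ℝ) * lam = ((2:ℕ):ℝ) * lam by norm_num, Real.rpow_mul hx, Real.rpow_natCast]
    have h2 : (x:ℝ) ^ 2 = (2 / a) * (a / 2 * x ^ 2) := by
      field_simp
    have h4 : (2 / a) ^ lam = 2 ^ lam * a ^ (-lam) := by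
      rw [div_eq_mul_inv, Real.mul_rpow (by norm_num) (by positivity), Real.inv_rpow ha.le,
        ← Real.rpow_neg ha.le]
    have h3 := aux_rpow_exp hlam (show (0:ℝ) ≤ a / 2 * x ^ 2 by positivity)
    calc x ^ (2 * lam) = ((2 / a) * (a / 2 * x ^ 2)) ^ lam := by
          rw [h1, ← h2]
      _ = (2 / a) ^ lam * (a / 2 * x ^ 2) ^ lam :=
          Real.mul_rpow (by positivity) (by positivity)
      _ ≤ (2 / a) ^ lam * (lam ^ lam * Real.exp (a / 2 * x ^ 2)) :=
          mul_le_mul_of_nonneg_left h3 (by positivity)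
      _ = K * Real.exp (a / 2 * x ^ 2) := by rw [h4, hKeq]; ring
  set g : ℕ → ℝ := fun n =>
    ((n:ℝ) + 1) ^ (2 * lam) * Real.exp (2 * a * (((n:ℝ) + 1) - ((n:ℝ) + 1) ^ 2)) with hgeq
  have hgnonneg : ∀ n : ℕ, 0 ≤ g n := by
    intro n
    simp only [hgeq]
    positivity
  -- the key termwise bound for n ≥ 1
  have hgle : ∀ n : ℕ, g (n + 1) ≤ K * Real.exp (-(a / 2 * ((n:ℝ) + 1) ^ 2)) := by
    intro n
    have hx : ((n + 1 : ℕ) : ℝ) + 1 = (n:ℝ) + 2 := by push_cast; ring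
    simp only [hgeq]
    rw [hx]
    have hn0 : (0:ℝ) ≤ (n:ℝ) := Nat.cast_nonneg n
    have e1 : Real.exp (2 * a * (((n:ℝ) + 2) - ((n:ℝ) + 2) ^ 2))
        ≤ Real.exp (-(a * ((n:ℝ) + 2) ^ 2)) := by
      apply Real.exp_le_exp.2
      nlinarith [mul_nonneg ha.le hn0, mul_nonneg (mul_nonneg ha.le hn0) hn0]
    have e2 := hpoly ((n:ℝ) + 2) (by positivity)
    calc ((n:ℝ) + 2) ^ (2 * lam) * Real.exp (2 * a * (((n:ℝ) + 2) - ((n:ℝ) + 2) ^ 2))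
        ≤ (K * Real.exp (a / 2 * ((n:ℝ) + 2) ^ 2)) * Real.exp (-(a * ((n:ℝ) + 2) ^ 2)) :=
          mul_le_mul e2 e1 (Real.exp_pos _).le (mul_nonneg hK0 (Real.exp_pos _).le)
      _ = K * Real.exp (a / 2 * ((n:ℝ) + 2) ^ 2 + -(a * ((n:ℝ) + 2) ^ 2)) := by
          rw [mul_assoc, ← Real.exp_add]
      _ = K * Real.exp (-(a / 2 * ((n:ℝ) + 2) ^ 2)) := by
          rw [show a / 2 * ((n:ℝ) + 2) ^ 2 + -(a * ((n:ℝ) + 2) ^ 2)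
            = -(a / 2 * ((n:ℝ) + 2) ^ 2) by ring]
      _ ≤ K * Real.exp (-(a / 2 * ((n:ℝ) + 1) ^ 2)) := by
          apply mul_le_mul_of_nonneg_left _ hK0
          apply Real.exp_le_exp.2
          nlinarith [mul_nonneg ha.le hn0]
  -- a crude majorant valid for all n, for summability
  have hgmaj : ∀ n : ℕ, g n ≤ (K * Real.exp a) * Real.exp (-(a / 2 * ((n:ℝ) + 1) ^ 2)) := by
    intro n
    simp only [hgeq]
    have hn0 : (0:ℝ) ≤ (n:ℝ) := Nat.cast_nonneg n
    have e1 : Real.exp (2 * a * (((n:ℝ) + 1) - ((n:ℝ) + 1) ^ 2))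
        ≤ Real.exp (a - a * ((n:ℝ) + 1) ^ 2) := by
      apply Real.exp_le_exp.2
      nlinarith [mul_nonneg (mul_nonneg ha.le hn0) hn0]
    calc ((n:ℝ) + 1) ^ (2 * lam) * Real.exp (2 * a * (((n:ℝ) + 1) - ((n:ℝ) + 1) ^ 2))
        ≤ (K * Real.exp (a / 2 * ((n:ℝ) + 1) ^ 2)) * Real.exp (a - a * ((n:ℝ) + 1) ^ 2) :=
          mul_le_mul (hpoly _ (by positivity)) e1 (Real.exp_pos _).le
            (mul_nonneg hK0 (Real.exp_pos _).le)
      _ = (K * Real.exp a) * Real.exp (-(a / 2 * ((n:ℝ) + 1) ^ 2)) := by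
          have hexpid : Real.exp (a / 2 * ((n:ℝ) + 1) ^ 2) * Real.exp (a - a * ((n:ℝ) + 1) ^ 2)
              = Real.exp a * Real.exp (-(a / 2 * ((n:ℝ) + 1) ^ 2)) := by
            rw [← Real.exp_add, ← Real.exp_add]
            congr 1
            ring
          linear_combination K * hexpid
  have hgsum : Summable g :=
    Summable.of_nonneg_of_le hgnonneg hgmaj ((aux_summable_exp_sq ha2).mul_left _)
  have hgsum1 : Summable (fun n : ℕ => g (n + 1)) := (summable_nat_add_iff 1).2 hgsum
  have htail : ∑' n : ℕ, g (n + 1) ≤ K * (1 + 2 / Real.sqrt (a / 2)) :=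
    calc ∑' n : ℕ, g (n + 1)
        ≤ ∑' n : ℕ, K * Real.exp (-(a / 2 * ((n:ℝ) + 1) ^ 2)) :=
          Summable.tsum_le_tsum hgle hgsum1 ((aux_summable_exp_sq ha2).mul_left K)
      _ = K * ∑' n : ℕ, Real.exp (-(a / 2 * ((n:ℝ) + 1) ^ 2)) := tsum_mul_left
      _ ≤ K * (1 + 2 / Real.sqrt (a / 2)) :=
          mul_le_mul_of_nonneg_left (aux_gauss_bound ha2) hK0
  have hg0 : g 0 = 1 := by
    simp only [hgeq]
    norm_num
  have hGle : ∑' n : ℕ, g n ≤ 1 + K * (1 + 2 / Real.sqrt (a / 2)) := by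
    rw [Summable.tsum_eq_zero_add hgsum, hg0]
    linarith [htail]
  -- identify the positive and negative parts of the integer sum with g
  have hFpos : ∀ n : ℕ, |(((n:ℤ) + 1 : ℤ):ℝ)| ^ (2 * lam) *
      Real.exp (2 * eta * (|(((n:ℤ) + 1 : ℤ):ℝ)| - (((n:ℤ) + 1 : ℤ):ℝ) ^ 2) * t) = g n := by
    intro n
    have h1 : (((n:ℤ) + 1 : ℤ) : ℝ) = (n:ℝ) + 1 := by push_cast; ring
    rw [h1, abs_of_nonneg (by positivity : (0:ℝ) ≤ (n:ℝ) + 1)]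
    simp only [hgeq]
    rw [show 2 * eta * (((n:ℝ) + 1) - ((n:ℝ) + 1) ^ 2) * t
      = 2 * a * (((n:ℝ) + 1) - ((n:ℝ) + 1) ^ 2) by rw [haeq]; ring]
  have hFneg : ∀ n : ℕ, |((-((n:ℤ) + 1) : ℤ):ℝ)| ^ (2 * lam) *
      Real.exp (2 * eta * (|((-((n:ℤ) + 1) : ℤ):ℝ)| - ((-((n:ℤ) + 1) : ℤ):ℝ) ^ 2) * t) = g n := by
    intro n
    have h1 : ((-((n:ℤ) + 1) : ℤ) : ℝ) = -((n:ℝ) + 1) := by push_cast; ring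
    rw [h1, abs_neg, abs_of_nonneg (by positivity : (0:ℝ) ≤ (n:ℝ) + 1)]
    simp only [hgeq]
    rw [show 2 * eta * (((n:ℝ) + 1) - (-((n:ℝ) + 1)) ^ 2) * t
      = 2 * a * (((n:ℝ) + 1) - ((n:ℝ) + 1) ^ 2) by rw [haeq]; ring]
  have hsp : Summable (fun n : ℕ => |(((n:ℤ) + 1 : ℤ):ℝ)| ^ (2 * lam) *
      Real.exp (2 * eta * (|(((n:ℤ) + 1 : ℤ):ℝ)| - (((n:ℤ) + 1 : ℤ):ℝ) ^ 2) * t)) :=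
    hgsum.congr (fun n => (hFpos n).symm)
  have hsn : Summable (fun n : ℕ => |((-((n:ℤ) + 1) : ℤ):ℝ)| ^ (2 * lam) *
      Real.exp (2 * eta * (|((-((n:ℤ) + 1) : ℤ):ℝ)| - ((-((n:ℤ) + 1) : ℤ):ℝ) ^ 2) * t)) :=
    hgsum.congr (fun n => (hFneg n).symm)
  have hF0 : |((0:ℤ):ℝ)| ^ (2 * lam) *
      Real.exp (2 * eta * (|((0:ℤ):ℝ)| - ((0:ℤ):ℝ) ^ 2) * t) ≤ 1 := by
    simp only [Int.cast_zero, abs_zero]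
    rw [show 2 * eta * ((0:ℝ) - (0:ℝ) ^ 2) * t = 0 by ring, Real.exp_zero, mul_one]
    rcases eq_or_lt_of_le hlam with h0 | h0
    · rw [← h0]
      norm_num
    · rw [Real.zero_rpow (by positivity)]
      norm_num
  have hsplit : (∑' k : ℤ, |(k:ℝ)| ^ (2 * lam) * Real.exp (2 * eta * (|(k:ℝ)| - (k:ℝ) ^ 2) * t))
      = (∑' n : ℕ, g n) + (|((0:ℤ):ℝ)| ^ (2 * lam) *
          Real.exp (2 * eta * (|((0:ℤ):ℝ)| - ((0:ℤ):ℝ) ^ 2) * t)) + (∑' n : ℕ, g n) := by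
    rw [tsum_of_add_one_of_neg_add_one (f := fun k : ℤ => |(k:ℝ)| ^ (2 * lam) *
      Real.exp (2 * eta * (|(k:ℝ)| - (k:ℝ) ^ 2) * t)) hsp hsn]
    congr 1
    · congr 1
      exact tsum_congr hFpos
    · exact tsum_congr hFneg
  have hS : (∑' k : ℤ, |(k:ℝ)| ^ (2 * lam) * Real.exp (2 * eta * (|(k:ℝ)| - (k:ℝ) ^ 2) * t))
      ≤ 3 + (2 * K + 4 * K / Real.sqrt (a / 2)) := by
    rw [hsplit]
    have := add_le_add (add_le_add hGle hF0) hGle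
    calc (∑' n : ℕ, g n) + _ + (∑' n : ℕ, g n)
        ≤ (1 + K * (1 + 2 / Real.sqrt (a / 2))) + 1 + (1 + K * (1 + 2 / Real.sqrt (a / 2))) := this
      _ = 3 + (2 * K + 4 * K / Real.sqrt (a / 2)) := by ring
  have h2K : (0:ℝ) ≤ 2 * K := by linarith
  have h4K : (0:ℝ) ≤ 4 * K / Real.sqrt (a / 2) := div_nonneg (by linarith) (Real.sqrt_nonneg _)
  have hsqrtS : Real.sqrt (∑' k : ℤ, |(k:ℝ)| ^ (2 * lam) *
        Real.exp (2 * eta * (|(k:ℝ)| - (k:ℝ) ^ 2) * t))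
      ≤ Real.sqrt 3 + (Real.sqrt (2 * K) + Real.sqrt (4 * K / Real.sqrt (a / 2))) := by
    calc Real.sqrt (∑' k : ℤ, |(k:ℝ)| ^ (2 * lam) *
            Real.exp (2 * eta * (|(k:ℝ)| - (k:ℝ) ^ 2) * t))
        ≤ Real.sqrt (3 + (2 * K + 4 * K / Real.sqrt (a / 2))) := Real.sqrt_le_sqrt hS
      _ ≤ Real.sqrt 3 + Real.sqrt (2 * K + 4 * K / Real.sqrt (a / 2)) :=
          aux_sqrt_add (by norm_num) (by linarith)
      _ ≤ Real.sqrt 3 + (Real.sqrt (2 * K) + Real.sqrt (4 * K / Real.sqrt (a / 2))) := by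
          linarith [aux_sqrt_add h2K h4K]
  -- rewrite the two square roots as rpow expressions
  have hlamnn : (0:ℝ) ≤ lam ^ lam := Real.rpow_nonneg hlam _
  have hsB1 : Real.sqrt (2 * K) = Real.sqrt (2 ^ (lam + 1) * lam ^ lam) * a ^ (-(lam / 2)) := by
    rw [hKeq, show (2:ℝ) * (2 ^ lam * lam ^ lam * a ^ (-lam))
        = (2 ^ (lam + 1) * lam ^ lam) * a ^ (-lam) by
      rw [Real.rpow_add (by norm_num : (0:ℝ) < 2), Real.rpow_one]; ring]
    rw [Real.sqrt_mul (mul_nonneg (by positivity) hlamnn), aux_sqrt_rpow ha]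
    congr 2
    ring
  have hsa : 0 < Real.sqrt a := Real.sqrt_pos.2 ha
  have hs2 : 0 < Real.sqrt 2 := by positivity
  have hB2eq : 4 * K / Real.sqrt (a / 2)
      = (2 ^ (lam + 2) * Real.sqrt 2 * lam ^ lam) * a ^ (-(lam + 1 / 2)) := by
    rw [Real.sqrt_div ha.le, hKeq]
    rw [show a ^ (-(lam + 1 / 2)) = a ^ (-lam) * a ^ (-(1 / 2 : ℝ)) by
      rw [← Real.rpow_add ha]; congr 1; ring]
    rw [show a ^ (-(1 / 2 : ℝ)) = 1 / Real.sqrt a by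
      rw [Real.rpow_neg ha.le, ← Real.sqrt_eq_rpow]; exact (one_div _).symm]
    rw [show (2:ℝ) ^ (lam + 2) = 2 ^ lam * 2 * 2 by
      rw [show lam + 2 = lam + 1 + 1 by ring, Real.rpow_add_one (two_ne_zero),
        Real.rpow_add_one (two_ne_zero)]]
    field_simp
    ring
  have hsB2 : Real.sqrt (4 * K / Real.sqrt (a / 2))
      = Real.sqrt (2 ^ (lam + 2) * Real.sqrt 2 * lam ^ lam) * a ^ (-((1 + 2 * lam) / 4)) := by
    rw [hB2eq, Real.sqrt_mul (mul_nonneg (mul_nonneg (by positivity) hs2.le) hlamnn),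
      aux_sqrt_rpow ha]
    congr 2
    ring
  rw [hsB1, hsB2] at hsqrtS
  have hX : (0:ℝ) ≤ a ^ (-(lam / 2)) := Real.rpow_nonneg ha.le _
  have hY : (0:ℝ) ≤ a ^ (-((1 + 2 * lam) / 4)) := Real.rpow_nonneg ha.le _
  have h3' : (0:ℝ) ≤ Real.sqrt 3 := Real.sqrt_nonneg _
  have hc2 : (0:ℝ) ≤ Real.sqrt (2 ^ (lam + 1) * lam ^ lam) := Real.sqrt_nonneg _
  have hc3 : (0:ℝ) ≤ Real.sqrt (2 ^ (lam + 2) * Real.sqrt 2 * lam ^ lam) := Real.sqrt_nonneg _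
  nlinarith [hsqrtS, mul_nonneg h3' hX, mul_nonneg h3' hY, mul_nonneg hc2 hX,
    mul_nonneg hc2 hY, mul_nonneg hc3 hX, mul_nonneg hc3 hY]
end

section
/- Let λ ≥ 0, η > 0, t > 0 and suppose √(λ/(ηt)) ≤ 1. Then ∑_{k=2}^∞ k^{2λ} e^{−ηk²t} ≤ (1/2) (ηt)^{−(1+2λ)/2} Γ((1+2λ)/2). -/
open Real Set MeasureTheory

/-- Let λ ≥ 0, η > 0, t > 0 with √(λ/(ηt)) ≤ 1. Then
`∑_{k=2}^∞ k^{2λ} e^{−ηk²t} ≤ (1/2) (ηt)^{−(1+2λ)/2} Γ((1+2λ)/2)`. -/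
theorem stmt3 (lam eta t : ℝ) (hlam : 0 ≤ lam) (heta : 0 < eta) (ht : 0 < t)
    (h : Real.sqrt (lam / (eta * t)) ≤ 1) :
    ∑' n : ℕ, ((n : ℝ) + 2) ^ (2 * lam) * Real.exp (-eta * ((n : ℝ) + 2) ^ 2 * t) ≤
      (1 / 2) * (eta * t) ^ (-((1 + 2 * lam) / 2)) * Real.Gamma ((1 + 2 * lam) / 2) := by
  set b := eta * t with hbdef
  have hb : 0 < b := mul_pos heta ht
  set f : ℝ → ℝ := fun x => x ^ (2 * lam) * Real.exp (-b * x ^ 2) with hf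
  -- lam ≤ b
  have hlb : lam ≤ b := by
    have h1 : lam / b ≤ 1 := by
      have := Real.sq_sqrt (div_nonneg hlam hb.le)
      nlinarith [Real.sqrt_nonneg (lam / b)]
    exact (div_le_one hb).mp h1
  -- antitone on [1, ∞)
  have hanti : AntitoneOn f (Set.Ici 1) := by
    intro x hx y hy hxy
    have hx1 : (1:ℝ) ≤ x := hx
    have hy1 : (1:ℝ) ≤ y := hy
    have hx0 : 0 < x := by linarith
    have hy0 : 0 < y := by linarith
    simp only [hf]
    rw [Real.rpow_def_of_pos hx0, Real.rpow_def_of_pos hy0, ← Real.exp_add, ← Real.exp_add]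
    apply Real.exp_le_exp.2
    have hlog : Real.log y - Real.log x ≤ y - x := by
      have h2 := Real.log_le_sub_one_of_pos (show 0 < y / x by positivity)
      rw [Real.log_div hy0.ne' hx0.ne'] at h2
      have hyx : y / x - 1 ≤ y - x := by
        rw [div_sub_one hx0.ne', div_le_iff₀ hx0]
        nlinarith
      linarith
    nlinarith [mul_le_mul_of_nonneg_left hlog hlam,
      mul_nonneg (sub_nonneg.2 hlb) (sub_nonneg.2 hxy),
      mul_nonneg (mul_nonneg hb.le (sub_nonneg.2 hxy)) (by linarith : (0:ℝ) ≤ x + y - 2)]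
  -- integrability and nonnegativity
  have hint : IntegrableOn f (Set.Ioi (0:ℝ)) :=
    integrableOn_rpow_mul_exp_neg_mul_sq hb (by linarith : (-1:ℝ) < 2 * lam)
  have hnn : ∀ x ∈ Set.Ioi (0:ℝ), 0 ≤ f x := fun x hx =>
    mul_nonneg (Real.rpow_nonneg (le_of_lt hx) _) (Real.exp_pos _).le
  set I := ∫ x in Set.Ioi (0:ℝ), f x with hI
  -- finite sums are bounded by I
  have key : ∀ N : ℕ, ∑ i ∈ Finset.range N, f ((i:ℝ) + 2) ≤ I := by
    intro N
    have hanti' : AntitoneOn f (Set.Icc 1 (1 + (N:ℝ))) := by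
      apply hanti.mono
      intro x hx
      exact hx.1
    have h1 := hanti'.sum_le_integral
    have heq : ∀ i : ℕ, f ((1:ℝ) + ((i + 1 : ℕ):ℝ)) = f ((i:ℝ) + 2) := by
      intro i; congr 1; push_cast; ring
    rw [Finset.sum_congr rfl (fun i _ => heq i)] at h1
    refine h1.trans ?_
    rw [intervalIntegral.integral_of_le (by linarith [Nat.cast_nonneg (α := ℝ) N])]
    apply setIntegral_mono_set hint
    · filter_upwards [ae_restrict_mem measurableSet_Ioi] with x hx using hnn x hx
    · refine HasSubset.Subset.eventuallyLE fun x hx => ?_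
      exact lt_trans one_pos hx.1
  -- pass to the tsum
  have hsum : ∑' n : ℕ, f ((n:ℝ) + 2) ≤ I :=
    Real.tsum_le_of_sum_range_le (fun n => mul_nonneg
      (Real.rpow_nonneg (by positivity) _) (Real.exp_pos _).le) key
  -- compute I
  have hIval : I = b ^ (-(2 * lam + 1) / 2) * (1 / 2) * Real.Gamma ((2 * lam + 1) / 2) := by
    rw [hI, ← integral_rpow_mul_exp_neg_mul_rpow two_pos
      (by linarith : (-1:ℝ) < 2 * lam) hb]
    refine setIntegral_congr_fun measurableSet_Ioi fun x _ => ?_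
    rw [hf]; simp only []
    rw [Real.rpow_two]
  -- convert summand and conclude
  have hconv : ∀ n : ℕ, ((n : ℝ) + 2) ^ (2 * lam) * Real.exp (-eta * ((n : ℝ) + 2) ^ 2 * t)
      = f ((n:ℝ) + 2) := by
    intro n
    simp only [hf]
    congr 1
    rw [hbdef]; ring
  calc ∑' n : ℕ, ((n : ℝ) + 2) ^ (2 * lam) * Real.exp (-eta * ((n : ℝ) + 2) ^ 2 * t)
      = ∑' n : ℕ, f ((n:ℝ) + 2) := by exact tsum_congr hconv
    _ ≤ I := hsum
    _ = (1 / 2) * b ^ (-((1 + 2 * lam) / 2)) * Real.Gamma ((1 + 2 * lam) / 2) := by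
        rw [hIval, show -(2 * lam + 1) / 2 = -((1 + 2 * lam) / 2) by ring,
          show (2 * lam + 1) / 2 = (1 + 2 * lam) / 2 by ring]
        ring
end

section
/- Let η > 0, s < 0, 0 < T ≤ 1, and let S(t) be the semigroup with Fourier symbol e^{(iβk|k| − η(k²−|k|))t}. Then there is a constant C(s) such that for all φ ∈ H^s(𝕋) and all t ∈ (0,T], t^{|s|/2} ‖S(t)φ‖_{L²(𝕋)} ≤ C(s) f_{s,η}(T) ‖φ‖_{H^s}, where f_{s,η}(t) = 1 + (t^{|s|/2} + η^{−|s|/2}) exp((η/8)(t + t^{1/2}√(t + 8|s|/η))). -/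
/-- The H^s(𝕋) norm, expressed through the Fourier coefficients. -/
noncomputable def hsNorm (s : ℝ) (f : ℤ → ℂ) : ℝ :=
  Real.sqrt (2 * Real.pi * ∑' k : ℤ, (1 + (k:ℝ) ^ 2) ^ s * ‖f k‖ ^ 2)

/-- The L²(𝕋) norm, expressed through the Fourier coefficients. -/
noncomputable def l2Norm (f : ℤ → ℂ) : ℝ :=
  Real.sqrt (2 * Real.pi * ∑' k : ℤ, ‖f k‖ ^ 2)

/-- The Fourier symbol `e^{(iβk|k| − η(k²−|k|)) t}` of the Chen–Lee semigroup `S(t)`. -/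
noncomputable def semigroupSymbol (β η t : ℝ) (k : ℤ) : ℂ :=
  Complex.exp ((Complex.I * (β * (k:ℝ) * |(k:ℝ)| : ℝ) -
    ((η * ((k:ℝ) ^ 2 - |(k:ℝ)|) : ℝ) : ℂ)) * (t : ℝ))

/-!
On the Fourier side `t^{|s|/2} S(t)` acts as a multiplier, so it suffices to bound
`t^{|s|/2} (1 + k²)^{|s|/2} e^{η(|k| - k²)t}` uniformly in `k`. For `t ≤ 1`,
`t (1 + k²) ≤ 1 + u²` with `u = √t |k|`, and completing the square gives
`η(|k| - k²)t = ηt/4 - ηv²` with `v = u - √t/2`. Splitting `1 + u ≤ 3/2 + |v|`, the constant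
part is absorbed by `e^{η(|k| - k²)t} ≤ 1` (as `|k| ≤ k²` on `ℤ`), and the part
`|v|^{|s|} e^{-ηv²}` by the Gaussian moment bound `≲ η^{-|s|/2}`, which leaves the factor
`e^{ηt/4} ≤ e^{(η/8)(T + √T √(T + 8|s|/η))}`.
-/

open Real

namespace Real

lemma add_rpow_le_two_rpow_mul_add_rpow {a b p : ℝ} (ha : 0 ≤ a) (hb : 0 ≤ b) (hp : 0 ≤ p) :
    (a + b) ^ p ≤ 2 ^ p * (a ^ p + b ^ p) := by
  have hmax : (a + b) ^ p ≤ 2 ^ p * max a b ^ p := by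
    rw [← mul_rpow zero_le_two (le_max_of_le_left ha)]
    exact rpow_le_rpow (add_nonneg ha hb) (by linarith [le_max_left a b, le_max_right a b]) hp
  have : max a b ^ p ≤ a ^ p + b ^ p := by
    rcases max_cases a b with ⟨h, -⟩ | ⟨h, -⟩ <;> rw [h] <;>
      linarith [rpow_nonneg ha p, rpow_nonneg hb p]
  exact hmax.trans (by gcongr)

lemma rpow_mul_exp_neg_le {a w : ℝ} (ha : 0 < a) (hw : 0 ≤ w) :
    w ^ a * exp (-w) ≤ a ^ a * exp (-a) := by
  have h : (w / a) ^ a ≤ exp (w - a) := by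
    calc (w / a) ^ a ≤ exp (w / a - 1) ^ a := by
          gcongr
          linarith [add_one_le_exp (w / a - 1)]
      _ = exp (w - a) := by rw [← exp_mul]; congr 1; field_simp
  rw [div_rpow hw ha.le, div_le_iff₀ (by positivity)] at h
  calc w ^ a * exp (-w) ≤ exp (w - a) * a ^ a * exp (-w) := by gcongr
    _ = a ^ a * exp (-a) := by rw [mul_comm, ← mul_assoc, ← exp_add]; ring_nf

lemma abs_rpow_mul_exp_neg_mul_sq_le {σ η : ℝ} (hσ : 0 < σ) (hη : 0 < η) (v : ℝ) :
    |v| ^ σ * exp (-(η * v ^ 2)) ≤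
      (σ / 2) ^ (σ / 2) * exp (-(σ / 2)) * η ^ (-(σ / 2)) := by
  have hv : |v| ^ σ = (η * v ^ 2) ^ (σ / 2) * η ^ (-(σ / 2)) := by
    rw [mul_rpow hη.le (sq_nonneg v), rpow_div_two_eq_sqrt σ (sq_nonneg v), sqrt_sq_eq_abs,
      mul_comm, ← mul_assoc, ← rpow_add hη, neg_add_cancel, rpow_zero, one_mul]
  rw [hv, mul_right_comm]
  exact mul_le_mul_of_nonneg_right
    (rpow_mul_exp_neg_le (by positivity) (by positivity)) (by positivity)

end Real

lemma rpow_mul_exp_mul_sub_sq_le {σ η t x : ℝ} (hσ : 0 < σ) (hη : 0 < η) (ht0 : 0 ≤ t)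
    (ht1 : t ≤ 1) (hx : 0 ≤ x) (hxx : x ≤ x ^ 2) :
    (t * (1 + x ^ 2)) ^ (σ / 2) * exp (η * (x - x ^ 2) * t) ≤
      2 ^ σ * ((3 / 2) ^ σ +
        (σ / 2) ^ (σ / 2) * exp (-(σ / 2)) * η ^ (-(σ / 2)) * exp (η * t / 4)) := by
  obtain ⟨r, hr0, hr1, rfl⟩ : ∃ r, 0 ≤ r ∧ r ≤ 1 ∧ t = r ^ 2 :=
    ⟨√t, sqrt_nonneg t, sqrt_le_one.mpr ht1, (sq_sqrt ht0).symm⟩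
  obtain ⟨v, hv⟩ : ∃ v, v = r * x - r / 2 := ⟨_, rfl⟩
  have hweight : (r ^ 2 * (1 + x ^ 2)) ^ (σ / 2) ≤ (3 / 2 + |v|) ^ σ := by
    rw [rpow_div_two_eq_sqrt σ (by positivity)]
    have : r * x ≤ |v| + 1 / 2 := by linarith [le_abs_self v]
    gcongr
    exact sqrt_le_iff.mpr ⟨by positivity, by nlinarith [mul_nonneg hr0 hx]⟩
  have hexp : η * (x - x ^ 2) * r ^ 2 = -(η * v ^ 2) + η * r ^ 2 / 4 := by rw [hv]; ring
  have hdecay : exp (η * (x - x ^ 2) * r ^ 2) ≤ 1 := exp_le_one_iff.mpr <| by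
    nlinarith [mul_nonneg (mul_nonneg hη.le (sub_nonneg.2 hxx)) (sq_nonneg r)]
  have hgauss : |v| ^ σ * exp (η * (x - x ^ 2) * r ^ 2) ≤
      (σ / 2) ^ (σ / 2) * exp (-(σ / 2)) * η ^ (-(σ / 2)) * exp (η * r ^ 2 / 4) := by
    rw [hexp, exp_add, ← mul_assoc]
    exact mul_le_mul_of_nonneg_right (abs_rpow_mul_exp_neg_mul_sq_le hσ hη v) (exp_pos _).le
  calc (r ^ 2 * (1 + x ^ 2)) ^ (σ / 2) * exp (η * (x - x ^ 2) * r ^ 2)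
      ≤ 2 ^ σ * ((3 / 2) ^ σ + |v| ^ σ) * exp (η * (x - x ^ 2) * r ^ 2) := by
        gcongr
        exact hweight.trans (add_rpow_le_two_rpow_mul_add_rpow (by norm_num) (abs_nonneg v) hσ.le)
    _ = 2 ^ σ * ((3 / 2) ^ σ * exp (η * (x - x ^ 2) * r ^ 2) +
          |v| ^ σ * exp (η * (x - x ^ 2) * r ^ 2)) := by ring
    _ ≤ _ := by
        gcongr
        exact mul_le_of_le_one_right (by positivity) hdecay

lemma norm_semigroupSymbol (β η t : ℝ) (k : ℤ) :
    ‖semigroupSymbol β η t k‖ = exp (η * (|(k : ℝ)| - (k : ℝ) ^ 2) * t) := by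
  rw [semigroupSymbol, Complex.norm_exp]
  congr 1
  simp only [Complex.mul_re, Complex.mul_im, Complex.sub_re, Complex.sub_im, Complex.I_re,
    Complex.I_im, Complex.ofReal_re, Complex.ofReal_im]
  ring

lemma rpow_mul_norm_semigroupSymbol_le (β : ℝ) {σ η t : ℝ} (hσ : 0 < σ) (hη : 0 < η)
    (ht0 : 0 ≤ t) (ht1 : t ≤ 1) (k : ℤ) :
    t ^ (σ / 2) * ‖semigroupSymbol β η t k‖ ≤
      2 ^ σ * ((3 / 2) ^ σ +
        (σ / 2) ^ (σ / 2) * exp (-(σ / 2)) * η ^ (-(σ / 2)) * exp (η * t / 4)) *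
        (1 + (k : ℝ) ^ 2) ^ (-(σ / 2)) := by
  have hk : |(k : ℝ)| ≤ |(k : ℝ)| ^ 2 := by
    rw [sq_abs]
    exact_mod_cast (Int.le_self_sq |k|).trans_eq (sq_abs k)
  have hbound := rpow_mul_exp_mul_sub_sq_le hσ hη ht0 ht1 (abs_nonneg _) hk
  rw [sq_abs] at hbound
  have hweight : 0 < 1 + (k : ℝ) ^ 2 := by positivity
  have hcancel : (1 + (k : ℝ) ^ 2) ^ (σ / 2) * (1 + (k : ℝ) ^ 2) ^ (-(σ / 2)) = 1 := by
    rw [← rpow_add hweight, add_neg_cancel, rpow_zero]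
  calc t ^ (σ / 2) * ‖semigroupSymbol β η t k‖
      = (t * (1 + (k : ℝ) ^ 2)) ^ (σ / 2) * exp (η * (|(k : ℝ)| - (k : ℝ) ^ 2) * t) *
          (1 + (k : ℝ) ^ 2) ^ (-(σ / 2)) := by
        rw [norm_semigroupSymbol, mul_rpow ht0 hweight.le, mul_right_comm _ _ (exp _),
          mul_assoc _ _ (_ ^ (-(σ / 2))), hcancel, mul_one]
    _ ≤ _ := by gcongr

lemma l2Norm_const_mul (c : ℂ) (f : ℤ → ℂ) :
    l2Norm (fun k => c * f k) = ‖c‖ * l2Norm f := by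
  simp only [l2Norm, norm_mul, mul_pow, tsum_mul_left]
  rw [mul_left_comm, sqrt_mul (sq_nonneg _), sqrt_sq (norm_nonneg c)]

lemma l2Norm_mul_le_hsNorm {s M : ℝ} {a φ : ℤ → ℂ} (hM : 0 ≤ M)
    (ha : ∀ k : ℤ, ‖a k‖ ≤ M * (1 + (k : ℝ) ^ 2) ^ (s / 2))
    (hφ : Summable fun k : ℤ => (1 + (k : ℝ) ^ 2) ^ s * ‖φ k‖ ^ 2) :
    l2Norm (fun k => a k * φ k) ≤ M * hsNorm s φ := by
  have hterm (k : ℤ) :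
      ‖a k * φ k‖ ^ 2 ≤ M ^ 2 * ((1 + (k : ℝ) ^ 2) ^ s * ‖φ k‖ ^ 2) := by
    have hsq : ((1 + (k : ℝ) ^ 2) ^ (s / 2)) ^ 2 = (1 + (k : ℝ) ^ 2) ^ s := by
      rw [← rpow_mul_natCast (by positivity)]; norm_num
    calc ‖a k * φ k‖ ^ 2 = ‖a k‖ ^ 2 * ‖φ k‖ ^ 2 := by rw [norm_mul, mul_pow]
      _ ≤ (M * (1 + (k : ℝ) ^ 2) ^ (s / 2)) ^ 2 * ‖φ k‖ ^ 2 := by gcongr; exact ha k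
      _ = _ := by rw [mul_pow, hsq, mul_assoc]
  have hsum : ∑' k : ℤ, ‖a k * φ k‖ ^ 2 ≤
      M ^ 2 * ∑' k : ℤ, (1 + (k : ℝ) ^ 2) ^ s * ‖φ k‖ ^ 2 := by
    have hdom := hφ.mul_left (M ^ 2)
    rw [← tsum_mul_left]
    exact Summable.tsum_le_tsum hterm (.of_nonneg_of_le (fun _ => sq_nonneg _) hterm hdom) hdom
  rw [l2Norm, hsNorm, ← sqrt_sq hM, ← sqrt_mul (sq_nonneg M), mul_left_comm]
  gcongr

lemma exp_mul_div_four_le {η σ t T : ℝ} (hη : 0 < η) (hσ : 0 ≤ σ) (hT : 0 ≤ T)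
    (htT : t ≤ T) :
    exp (η * t / 4) ≤ exp (η / 8 * (T + √T * √(T + 8 * σ / η))) := by
  have hT_le : T ≤ √T * √(T + 8 * σ / η) := by
    calc T = √T * √T := (mul_self_sqrt hT).symm
      _ ≤ √T * √(T + 8 * σ / η) := by
        gcongr
        linarith [div_nonneg (by positivity : 0 ≤ 8 * σ) hη.le]
  gcongr
  nlinarith

/-- For s < 0 there is C = C(s) > 0 such that for all η > 0, 0 < T ≤ 1,
every φ ∈ H^s(𝕋) and all t ∈ (0,T],
`t^{|s|/2} ‖S(t)φ‖_{L²} ≤ C f_{s,η}(T) ‖φ‖_{H^s}`, where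
`f_{s,η}(T) = 1 + (T^{|s|/2} + η^{−|s|/2}) e^{(η/8)(T + √T √(T+8|s|/η))}`. -/
theorem stmt8 (s : ℝ) (hs : s < 0) :
    ∃ C > (0:ℝ), ∀ (β η T : ℝ), 0 < η → 0 < T → T ≤ 1 →
      ∀ φ : ℤ → ℂ, (Summable fun k : ℤ => (1 + (k:ℝ) ^ 2) ^ s * ‖φ k‖ ^ 2) →
        ∀ t ∈ Set.Ioc (0:ℝ) T,
          t ^ (|s| / 2) * l2Norm (fun k => semigroupSymbol β η t k * φ k) ≤
            C * (1 + (T ^ (|s| / 2) + η ^ (-(|s| / 2))) *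
                Real.exp (η / 8 * (T + Real.sqrt T * Real.sqrt (T + 8 * |s| / η)))) *
              hsNorm s φ := by
  have hσ : 0 < |s| := abs_pos.mpr hs.ne
  have hexponent : -(|s| / 2) = s / 2 := by rw [abs_of_neg hs]; ring
  set c := (|s| / 2) ^ (|s| / 2) * exp (-(|s| / 2))
  refine ⟨2 ^ |s| * ((3 / 2) ^ |s| + c), by positivity, ?_⟩
  rintro β η T hη hT0 hT1 φ hφ t ⟨ht0, htT⟩
  set X := η ^ (-(|s| / 2)) * exp (η * t / 4)
  set Y := (T ^ (|s| / 2) + η ^ (-(|s| / 2))) * exp (η / 8 * (T + √T * √(T + 8 * |s| / η)))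
  have hXY : X ≤ Y := mul_le_mul (le_add_of_nonneg_left (by positivity))
    (exp_mul_div_four_le hη hσ.le hT0.le htT) (by positivity) (by positivity)
  have hconst : (3 / 2) ^ |s| + c * X ≤ ((3 / 2) ^ |s| + c) * (1 + Y) := by
    nlinarith [show 0 ≤ c by positivity, show 0 ≤ Y by positivity,
      show 0 ≤ (3 / 2 : ℝ) ^ |s| by positivity]
  have hmult (k : ℤ) : ‖((t ^ (|s| / 2) : ℝ) : ℂ) * semigroupSymbol β η t k‖ ≤
      2 ^ |s| * ((3 / 2) ^ |s| + c * X) * (1 + (k : ℝ) ^ 2) ^ (s / 2) := by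
    rw [norm_mul, Complex.norm_real, norm_of_nonneg (by positivity), ← hexponent, ← mul_assoc c]
    exact rpow_mul_norm_semigroupSymbol_le β hσ hη ht0.le (htT.trans hT1) k
  calc t ^ (|s| / 2) * l2Norm (fun k => semigroupSymbol β η t k * φ k)
      = l2Norm (fun k => ((t ^ (|s| / 2) : ℝ) : ℂ) * semigroupSymbol β η t k * φ k) := by
        simp_rw [mul_assoc, l2Norm_const_mul, Complex.norm_real,
          norm_of_nonneg (by positivity : 0 ≤ t ^ (|s| / 2))]
    _ ≤ 2 ^ |s| * ((3 / 2) ^ |s| + c * X) * hsNorm s φ :=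
        l2Norm_mul_le_hsNorm (by positivity) hmult hφ
    _ ≤ _ := by
        rw [mul_assoc (2 ^ |s|) ((3 / 2) ^ |s| + c)]
        exact mul_le_mul_of_nonneg_right (mul_le_mul_of_nonneg_left hconst (by positivity))
          (sqrt_nonneg _)
end

section
/- Let β, η > 0, s < 0, and for an integer N > 1 define ψ(1,N) = β[(1−N)|1−N| − 1 + N·N] = 2β(N−1) and σ(1,N) = η[(1−N)² − |1−N| − 1 + 1 + N² − N] = 2η(N−1)². Then the real part of (e^{t(iψ(1,N)−σ(1,N))} − 1)/(iψ(1,N) − σ(1,N)) is bounded below by c·(η − (η+β)e^{−tηN²})/((η²+β²)N²) for some absolute constant c > 0, uniformly in t > 0 and N large. -/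
set_option maxHeartbeats 1000000


/-- There is an absolute constant c > 0 such that for all β, η > 0 and s < 0,
with the resonance values ψ(1,N) = 2β(N−1) and σ(1,N) = 2η(N−1)², the real part of
`(e^{t(iψ(1,N)−σ(1,N))} − 1)/(iψ(1,N) − σ(1,N))` is bounded below by
`c (η − (η+β) e^{−tηN²}) / ((η²+β²) N²)`, uniformly in t > 0 and N large. -/
theorem stmt14 :
    ∃ c > (0:ℝ), ∀ (β η s : ℝ), 0 < β → 0 < η → s < 0 →
      ∃ N₀ : ℤ, (1:ℤ) < N₀ ∧ ∀ N : ℤ, N₀ ≤ N → ∀ t : ℝ, 0 < t →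
        c * (η - (η + β) * Real.exp (-t * η * (N:ℝ) ^ 2)) / ((η ^ 2 + β ^ 2) * (N:ℝ) ^ 2) ≤
          ((Complex.exp ((t:ℝ) * (Complex.I * ((2 * β * ((N:ℝ) - 1) : ℝ) : ℂ) -
                ((2 * η * ((N:ℝ) - 1) ^ 2 : ℝ) : ℂ))) - 1) /
            (Complex.I * ((2 * β * ((N:ℝ) - 1) : ℝ) : ℂ) -
              ((2 * η * ((N:ℝ) - 1) ^ 2 : ℝ) : ℂ))).re := by
  refine ⟨1/4, by norm_num, ?_⟩
  intro β η s hβ hη _hs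
  refine ⟨max 4 (⌈β/η⌉ + 1), lt_of_lt_of_le (by norm_num) (le_max_left _ _), ?_⟩
  intro N hN t ht
  have hN4 : (4:ℝ) ≤ (N:ℝ) := by
    exact_mod_cast (le_trans (le_max_left 4 (⌈β/η⌉ + 1)) hN : (4:ℤ) ≤ N)
  have hceil : (⌈β/η⌉ : ℝ) ≤ (N:ℝ) - 1 := by
    have h1 : ⌈β/η⌉ + 1 ≤ N := le_trans (le_max_right _ _) hN
    have h2 : (⌈β/η⌉ : ℤ) ≤ N - 1 := by omega
    have h3 : ((⌈β/η⌉:ℤ):ℝ) ≤ ((N - 1 : ℤ):ℝ) := by exact_mod_cast h2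
    push_cast at h3
    linarith
  have hβη : β ≤ η * ((N:ℝ) - 1) := by
    have h1 : β / η ≤ (N:ℝ) - 1 := le_trans (Int.le_ceil _) hceil
    calc β = η * (β / η) := by field_simp
    _ ≤ η * ((N:ℝ) - 1) := by nlinarith
  set ψ : ℝ := 2 * β * ((N:ℝ) - 1) with hψdef
  set σ : ℝ := 2 * η * ((N:ℝ) - 1) ^ 2 with hσdef
  set F : ℝ := Real.exp (-t * η * (N:ℝ) ^ 2) with hFdef
  set E : ℝ := Real.exp (-(t * σ)) with hEdef
  have hN1 : (1:ℝ) ≤ (N:ℝ) - 1 := by linarith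
  have hψ0 : 0 < ψ := by rw [hψdef]; nlinarith
  have hσ0 : 0 < σ := by rw [hσdef]; nlinarith
  have hψσ : ψ ≤ σ := by rw [hψdef, hσdef]; nlinarith
  have hE0 : 0 < E := Real.exp_pos _
  have hE1 : E ≤ 1 := Real.exp_le_one_iff.mpr (by nlinarith)
  have hF0 : 0 < F := Real.exp_pos _
  have hF1 : F ≤ 1 := Real.exp_le_one_iff.mpr (by nlinarith)
  have hEF : E ≤ F := by
    apply Real.exp_le_exp.mpr
    have h2 : (0:ℝ) ≤ (N:ℝ)^2 - 4*(N:ℝ) + 2 := by nlinarith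
    rw [hσdef]
    nlinarith [mul_pos ht hη]
  have hKey : η * (σ^2 + ψ^2) ≤ 2 * σ * ((η^2 + β^2) * (N:ℝ)^2) := by
    rw [hψdef, hσdef]
    nlinarith [sq_nonneg ((N:ℝ) - 1), sq_nonneg β, sq_nonneg η,
      mul_nonneg (sq_nonneg β) (by nlinarith : (0:ℝ) ≤ (N:ℝ)^2 - 1),
      mul_nonneg (sq_nonneg η) (by nlinarith : (0:ℝ) ≤ (N:ℝ)^2 - ((N:ℝ)-1)^2)]
  have hD : 0 < (η^2 + β^2) * (N:ℝ)^2 := by positivity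
  have hD' : 0 < σ^2 + ψ^2 := by positivity
  have hre : ((Complex.exp ((t:ℝ) * (Complex.I * (ψ:ℂ) - (σ:ℂ))) - 1) /
      (Complex.I * (ψ:ℂ) - (σ:ℂ))).re
      = (σ * (1 - E * Real.cos (t*ψ)) + ψ * E * Real.sin (t*ψ)) / (σ^2 + ψ^2) := by
    rw [hEdef, Complex.div_re]
    simp [Complex.exp_re, Complex.exp_im, Complex.normSq_apply]
    ring
  rw [hre, div_le_div_iff₀ hD hD']
  have hcos : Real.cos (t*ψ) ≤ 1 := Real.cos_le_one _
  have hsin : -1 ≤ Real.sin (t*ψ) := Real.neg_one_le_sin _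
  set f : ℝ := σ * (1 - E * Real.cos (t*ψ)) + ψ * E * Real.sin (t*ψ) with hfdef
  by_cases hcase : t * ψ ≤ Real.pi
  · -- here sin(tψ) ≥ 0
    have hsin0 : 0 ≤ Real.sin (t*ψ) := Real.sin_nonneg_of_nonneg_of_le_pi
      (by positivity) hcase
    have h1 : σ * (1 - E) ≤ f := by
      rw [hfdef]
      nlinarith [mul_nonneg hσ0.le (mul_nonneg hE0.le (sub_nonneg.mpr hcos)),
        mul_nonneg (mul_nonneg hψ0.le hE0.le) hsin0]
    have h2 : (η/2) * (1 - F) * (σ^2 + ψ^2) ≤ (σ * (1 - E)) * ((η^2 + β^2) * (N:ℝ)^2) := by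
      nlinarith [mul_le_mul_of_nonneg_right hKey (by linarith : (0:ℝ) ≤ 1 - E),
        mul_le_mul_of_nonneg_right (mul_le_mul_of_nonneg_left hEF hη.le) hD'.le]
    have h3 : 1/4 * (η - (η + β) * F) ≤ η/2 * (1 - F) := by nlinarith
    have h4 := mul_le_mul_of_nonneg_right h3 hD'.le
    have h5 := mul_le_mul_of_nonneg_right h1 hD.le
    exact h4.trans (h2.trans h5)
  · push_neg at hcase
    have hpi : Real.pi ≤ t * σ := le_trans hcase.le (by nlinarith)
    have hexp4 : (4:ℝ) ≤ Real.exp Real.pi := by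
      nlinarith [Real.add_one_le_exp Real.pi, Real.pi_gt_three]
    have hE4 : E ≤ 1/4 := by
      have h1 : E ≤ Real.exp (-Real.pi) := Real.exp_le_exp.mpr (by linarith)
      have h2 : Real.exp (-Real.pi) = (Real.exp Real.pi)⁻¹ := Real.exp_neg _
      have h3 : (Real.exp Real.pi)⁻¹ ≤ (4:ℝ)⁻¹ := by
        apply inv_anti₀ (by norm_num) hexp4
      rw [h2] at h1
      linarith
    have h1 : σ / 2 ≤ f := by
      rw [hfdef]
      nlinarith [mul_nonneg hσ0.le (mul_nonneg hE0.le (sub_nonneg.mpr hcos)),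
        mul_nonneg (mul_nonneg hψ0.le hE0.le) (by linarith : (0:ℝ) ≤ Real.sin (t*ψ) + 1),
        mul_nonneg hE0.le (sub_nonneg.mpr hψσ),
        mul_nonneg hσ0.le (by linarith : (0:ℝ) ≤ 1 - 4*E)]
    have h2 : 1/4 * (η - (η + β) * F) * (σ^2 + ψ^2) ≤ (σ/2) * ((η^2 + β^2) * (N:ℝ)^2) := by
      nlinarith [mul_nonneg (mul_nonneg (by linarith : (0:ℝ) ≤ η + β) hF0.le) hD'.le]
    have h3 := mul_le_mul_of_nonneg_right h1 hD.le
    exact h2.trans h3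
end

section
/- Let s < −1, β, η > 0, T > 0, and let S(t) denote the semigroup with Fourier symbol e^{(iβk|k| − η(k²−|k|))t} on periodic Sobolev spaces. Then the bilinear estimate ‖∫_0^t S(t−t')[(S(t')φ)(S(t')φ)_x] dt'‖_{H^s} ≤ C ‖φ‖_{H^s}² fails: there is no constant C such that it holds for all φ ∈ H^s(𝕋) and all t ∈ [0,T]. -/
/-- The k-th Fourier coefficient of `∫_0^t S(t−t')[(S(t')φ)(S(t')φ)_x] dt'`, using
`[(S(t')φ)(S(t')φ)_x]^∧(k) = ∑_j (S(t')φ)^∧(j) · i(k−j) · (S(t')φ)^∧(k−j)`. -/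
noncomputable def bilinearTerm (β η : ℝ) (φ : ℤ → ℂ) (t : ℝ) (k : ℤ) : ℂ :=
  ∫ t' in Set.Ioo (0:ℝ) t,
    semigroupSymbol β η (t - t') k *
      ∑' j : ℤ, (semigroupSymbol β η t' j * φ j) *
        (Complex.I * ((k:ℝ) - (j:ℝ)) * (semigroupSymbol β η t' (k - j) * φ (k - j)))

open Complex Filter Topology
open scoped Pointwise

lemma summable_weighted_of_eq_zero (s : ℝ) {f : ℤ → ℂ} {S : Finset ℤ}
    (hf : ∀ k ∉ S, f k = 0) : Summable fun k : ℤ => (1 + (k:ℝ) ^ 2) ^ s * ‖f k‖ ^ 2 :=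
  summable_of_ne_finset_zero (s := S) fun k hk => by simp [hf k hk]

lemma sqrt_mul_norm_le_hsNorm {s : ℝ} {f : ℤ → ℂ}
    (hf : Summable fun k : ℤ => (1 + (k:ℝ) ^ 2) ^ s * ‖f k‖ ^ 2) (k : ℤ) :
    Real.sqrt (2 * Real.pi * (1 + (k:ℝ) ^ 2) ^ s) * ‖f k‖ ≤ hsNorm s f := by
  rw [hsNorm, ← Real.sqrt_sq (norm_nonneg (f k)), ← Real.sqrt_mul (by positivity), mul_assoc]
  gcongr
  exact hf.le_tsum k fun j _ => by positivity

lemma bilinearTerm_eq_zero_of_notMem_add {β η t : ℝ} {φ : ℤ → ℂ} {S : Finset ℤ}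
    (hφ : ∀ j ∉ S, φ j = 0) {k : ℤ} (hk : k ∉ S + S) : bilinearTerm β η φ t k = 0 := by
  have hterm : ∀ j : ℤ, φ j * φ (k - j) = 0 := fun j => by
    by_cases hj : j ∈ S
    · have : k - j ∉ S := fun h => hk (by simpa using Finset.add_mem_add hj h)
      simp [hφ _ this]
    · simp [hφ j hj]
  have hsum : ∀ t' : ℝ, (∑' j : ℤ, (semigroupSymbol β η t' j * φ j) *
      (I * ((k:ℝ) - (j:ℝ)) * (semigroupSymbol β η t' (k - j) * φ (k - j)))) = 0 := fun t' => by
    refine (tsum_congr fun j => ?_).trans tsum_zero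
    linear_combination (semigroupSymbol β η t' j * (I * ((k:ℝ) - (j:ℝ))) *
      semigroupSymbol β η t' (k - j)) * hterm j
  simp only [bilinearTerm, hsum, mul_zero, MeasureTheory.integral_zero]

lemma one_sub_exp_re_le_norm_exp_sub_one (z : ℂ) : 1 - Real.exp z.re ≤ ‖exp z - 1‖ := by
  simpa [norm_exp] using norm_sub_norm_le (1 : ℂ) (exp z) |>.trans_eq (norm_sub_rev _ _)

lemma exists_nat_mul_sq_rpow_lt {a : ℝ} (ha : 0 < a) (b : ℝ) {r : ℝ} (hr : r < 0) :
    ∃ m : ℕ, 1 ≤ m ∧ b * ((m:ℝ) ^ 2) ^ r < a := by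
  have hlim : Tendsto (fun m : ℕ => b * ((m:ℝ) ^ 2) ^ r) atTop (𝓝 0) := by
    have h := (tendsto_rpow_neg_atTop (neg_pos.2 hr)).comp
      ((tendsto_pow_atTop two_ne_zero).comp tendsto_natCast_atTop_atTop)
    simpa using h.const_mul b
  exact ((eventually_ge_atTop 1).and (hlim.eventually_lt_const ha)).exists

noncomputable def semigroupExponent (β η : ℝ) (k : ℤ) : ℂ :=
  I * (β * (k:ℝ) * |(k:ℝ)| : ℝ) - ((η * ((k:ℝ) ^ 2 - |(k:ℝ)|) : ℝ) : ℂ)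

lemma semigroupSymbol_eq_exp (β η t : ℝ) (k : ℤ) :
    semigroupSymbol β η t k = exp (semigroupExponent β η k * t) := rfl

lemma semigroupExponent_one (β η : ℝ) : semigroupExponent β η 1 = I * β := by
  simp [semigroupExponent]

noncomputable def interactionExponent (β η : ℝ) (m : ℕ) : ℂ := 2 * m * (I * β - η * m)

lemma semigroupExponent_add_semigroupExponent_neg (β η : ℝ) (m : ℕ) :
    semigroupExponent β η (m + 1) + semigroupExponent β η (-m) =
      I * β + interactionExponent β η m := by
  have habs : |(m:ℝ) + 1| = m + 1 := abs_of_nonneg (by positivity)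
  simp only [semigroupExponent, interactionExponent, Int.cast_add, Int.cast_neg,
    Int.cast_natCast, Int.cast_one, habs, abs_neg, Nat.abs_cast]
  push_cast
  ring

lemma interactionExponent_re (β η : ℝ) (m : ℕ) :
    (interactionExponent β η m).re = -(2 * η * m ^ 2) := by
  simp [interactionExponent, sq, mul_assoc, mul_left_comm]

lemma interactionExponent_ne_zero {β η : ℝ} (hη : 0 < η) {m : ℕ} (hm : 1 ≤ m) :
    interactionExponent β η m ≠ 0 := by
  intro h
  have hre := interactionExponent_re β η m
  rw [h, zero_re] at hre
  have : (0:ℝ) < m := by exact_mod_cast hm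
  nlinarith [mul_pos hη (pow_pos this 2)]

lemma norm_interactionExponent_le (β η : ℝ) (hη : 0 ≤ η) {m : ℕ} (hm : 1 ≤ m) :
    ‖interactionExponent β η m‖ ≤ 2 * (|β| + η) * m ^ 2 := by
  have hm' : (1:ℝ) ≤ m := by exact_mod_cast hm
  have hbound : ‖I * β - η * m‖ ≤ |β| + η * m := by
    calc ‖I * β - η * m‖ ≤ ‖I * (β:ℂ)‖ + ‖(η:ℂ) * m‖ := norm_sub_le _ _
      _ = |β| + η * m := by
        simp only [norm_mul, norm_I, norm_real, Real.norm_eq_abs, one_mul, abs_of_nonneg hη,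
          RCLike.norm_natCast]
  calc ‖interactionExponent β η m‖ = 2 * m * ‖I * β - η * m‖ := by
        simp [interactionExponent]
    _ ≤ 2 * m * (|β| + η * m) := by gcongr
    _ ≤ 2 * (|β| + η) * m ^ 2 := by
        have : 0 ≤ |β| * m * (m - 1) := by
          have := abs_nonneg β
          have : (0:ℝ) ≤ m - 1 := by linarith
          positivity
        nlinarith

def testFunction (m : ℕ) : ℤ → ℂ := fun k => if k = m + 1 ∨ k = -(m:ℤ) then 1 else 0

lemma testFunction_eq_zero {m : ℕ} {k : ℤ} (hk : k ∉ ({(m:ℤ) + 1, -(m:ℤ)} : Finset ℤ)) :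
    testFunction m k = 0 := by
  simp_all [testFunction]

lemma testFunction_natCast_add_one (m : ℕ) : testFunction m (m + 1) = 1 := by
  simp [testFunction]

lemma testFunction_neg_natCast (m : ℕ) : testFunction m (-m) = 1 := by
  simp [testFunction]

lemma hsNorm_testFunction_sq_le {s : ℝ} (hs : s ≤ 0) {m : ℕ} (hm : 1 ≤ m) :
    hsNorm s (testFunction m) ^ 2 ≤ 4 * Real.pi * ((m:ℝ) ^ 2) ^ s := by
  have hm' : (0:ℝ) < m ^ 2 := by positivity
  have hsum : (∑' k : ℤ, (1 + (k:ℝ) ^ 2) ^ s * ‖testFunction m k‖ ^ 2) =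
      (1 + ((m:ℝ) + 1) ^ 2) ^ s + (1 + (m:ℝ) ^ 2) ^ s := by
    rw [tsum_eq_sum (s := {(m:ℤ) + 1, -(m:ℤ)}) fun k hk => by simp [testFunction_eq_zero hk],
      Finset.sum_pair (by omega : (m:ℤ) + 1 ≠ -(m:ℤ))]
    simp [testFunction]
  have h1 : (1 + ((m:ℝ) + 1) ^ 2) ^ s ≤ ((m:ℝ) ^ 2) ^ s :=
    Real.rpow_le_rpow_of_nonpos hm' (by nlinarith [(Nat.cast_nonneg m : (0:ℝ) ≤ m)]) hs
  have h2 : (1 + (m:ℝ) ^ 2) ^ s ≤ ((m:ℝ) ^ 2) ^ s :=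
    Real.rpow_le_rpow_of_nonpos hm' (by linarith) hs
  rw [hsNorm, Real.sq_sqrt (by positivity), hsum]
  nlinarith [Real.pi_pos]

lemma bilinearTerm_testFunction_one (β η : ℝ) {T : ℝ} (hT : 0 ≤ T) {m : ℕ}
    (hμ : interactionExponent β η m ≠ 0) :
    bilinearTerm β η (testFunction m) T 1 = I * exp (I * β * T) *
      ((exp (interactionExponent β η m * T) - 1) / interactionExponent β η m) := by
  set μ := interactionExponent β η m
  have hintegrand : ∀ t' : ℝ, semigroupSymbol β η (T - t') 1 *
      (∑' j : ℤ, (semigroupSymbol β η t' j * testFunction m j) *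
        (I * (((1:ℤ):ℝ) - (j:ℝ)) * (semigroupSymbol β η t' (1 - j) * testFunction m (1 - j)))) =
      I * exp (I * β * T) * exp (μ * t') := fun t' => by
    have hexp : exp (semigroupExponent β η 1 * ((T:ℂ) - t')) *
        exp (semigroupExponent β η (m + 1) * t') * exp (semigroupExponent β η (-m) * t') =
        exp (I * β * T) * exp (μ * t') := by
      simp only [← exp_add]
      congr 1
      rw [semigroupExponent_one]
      linear_combination (t' : ℂ) * semigroupExponent_add_semigroupExponent_neg β η m
    rw [tsum_eq_sum (s := {(m:ℤ) + 1, -(m:ℤ)}) fun j hj => by simp [testFunction_eq_zero hj],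
      Finset.sum_pair (by omega : (m:ℤ) + 1 ≠ -(m:ℤ)),
      show (1:ℤ) - (m + 1) = -m by ring, show (1:ℤ) - -m = m + 1 by ring,
      testFunction_natCast_add_one, testFunction_neg_natCast]
    simp only [semigroupSymbol_eq_exp]
    push_cast
    linear_combination I * hexp
  rw [bilinearTerm, MeasureTheory.integral_congr_ae (.of_forall hintegrand),
    MeasureTheory.integral_const_mul, ← MeasureTheory.integral_Ioc_eq_integral_Ioo,
    ← intervalIntegral.integral_of_le hT, integral_exp_mul_complex hμ]
  simp

lemma norm_bilinearTerm_testFunction_one_ge {β η T : ℝ} (hη : 0 < η) (hT : 0 ≤ T) {m : ℕ}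
    (hm : 1 ≤ m) : (1 - Real.exp (-(2 * η * T))) / (2 * (|β| + η) * m ^ 2) ≤
      ‖bilinearTerm β η (testFunction m) T 1‖ := by
  have hμ := interactionExponent_ne_zero (β := β) hη hm
  have hm' : (1:ℝ) ≤ (m:ℝ) ^ 2 := by exact_mod_cast Nat.one_le_pow _ _ hm
  have hnum : 1 - Real.exp (-(2 * η * T)) ≤ ‖exp (interactionExponent β η m * T) - 1‖ := by
    refine le_trans ?_ (one_sub_exp_re_le_norm_exp_sub_one _)
    have hre : (interactionExponent β η m * T).re = -(2 * η * m ^ 2) * T := by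
      simp [interactionExponent_re]
    rw [hre]
    gcongr
    nlinarith [mul_nonneg hη.le hT]
  have hphase : ‖exp (I * β * T)‖ = 1 := by simp [norm_exp]
  rw [bilinearTerm_testFunction_one β η hT hμ, norm_mul, norm_mul, norm_div, norm_I, hphase,
    one_mul, one_mul]
  exact div_le_div₀ (norm_nonneg _) hnum (norm_pos_iff.2 hμ)
    (norm_interactionExponent_le β η hη.le hm)

lemma hsNorm_bilinearTerm_testFunction_ge (s : ℝ) {β η T : ℝ} (hη : 0 < η) (hT : 0 ≤ T)
    {m : ℕ} (hm : 1 ≤ m) :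
    Real.sqrt (2 * Real.pi * 2 ^ s) * ((1 - Real.exp (-(2 * η * T))) / (2 * (|β| + η))) /
      (m:ℝ) ^ 2 ≤ hsNorm s (bilinearTerm β η (testFunction m) T) := by
  have hsummable := summable_weighted_of_eq_zero s fun k hk =>
    bilinearTerm_eq_zero_of_notMem_add (β := β) (η := η) (t := T)
      (fun j hj => testFunction_eq_zero (m := m) hj) hk
  refine le_trans ?_ (sqrt_mul_norm_le_hsNorm hsummable 1)
  rw [show (1 + ((1:ℤ):ℝ) ^ 2) = 2 by norm_num, mul_div_assoc, div_div]
  exact mul_le_mul_of_nonneg_left (norm_bilinearTerm_testFunction_one_ge hη hT hm)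
    (Real.sqrt_nonneg _)

theorem stmt15_general (s β η T : ℝ) (hs : s < -1) (hη : 0 < η) (hT : 0 < T) :
    ¬ ∃ C : ℝ, ∀ φ : ℤ → ℂ,
        (Summable fun k : ℤ => (1 + (k:ℝ) ^ 2) ^ s * ‖φ k‖ ^ 2) →
        ∀ t ∈ Set.Icc (0:ℝ) T,
          hsNorm s (bilinearTerm β η φ t) ≤ C * (hsNorm s φ) ^ 2 := by
  rintro ⟨C, hC⟩
  set a := Real.sqrt (2 * Real.pi * 2 ^ s) * ((1 - Real.exp (-(2 * η * T))) / (2 * (|β| + η)))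
  have ha : 0 < a := by
    have : Real.exp (-(2 * η * T)) < 1 := Real.exp_lt_one_iff.2 (by nlinarith)
    have : 0 < |β| + η := by positivity
    have : 0 < Real.sqrt (2 * Real.pi * 2 ^ s) := by positivity
    positivity
  obtain ⟨m, hm, hlt⟩ := exists_nat_mul_sq_rpow_lt ha (4 * Real.pi * |C|)
    (by linarith : s + 1 < 0)
  have hm2 : (0:ℝ) < (m:ℝ) ^ 2 := by positivity
  have hest := hC (testFunction m) (summable_weighted_of_eq_zero s fun k hk =>
    testFunction_eq_zero hk) T ⟨hT.le, le_rfl⟩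
  have hchain : a / (m:ℝ) ^ 2 ≤ |C| * (4 * Real.pi * ((m:ℝ) ^ 2) ^ s) :=
    calc a / (m:ℝ) ^ 2 ≤ C * hsNorm s (testFunction m) ^ 2 :=
          (hsNorm_bilinearTerm_testFunction_ge s hη hT.le hm).trans hest
      _ ≤ |C| * (4 * Real.pi * ((m:ℝ) ^ 2) ^ s) := by
          gcongr
          exacts [le_abs_self C, hsNorm_testFunction_sq_le (by linarith) hm]
  rw [div_le_iff₀ hm2] at hchain
  rw [Real.rpow_add_one hm2.ne'] at hlt
  linarith

/-- For s < −1, β, η > 0 and T > 0, the bilinear estimate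
`‖∫_0^t S(t−t')[(S(t')φ)(S(t')φ)_x] dt'‖_{H^s} ≤ C ‖φ‖_{H^s}²` fails: there is no
constant C making it hold for all φ ∈ H^s(𝕋) and all t ∈ [0,T]. -/
theorem stmt15 (s β η T : ℝ) (hs : s < -1) (hβ : 0 < β) (hη : 0 < η) (hT : 0 < T) :
    ¬ ∃ C : ℝ, ∀ φ : ℤ → ℂ,
        (Summable fun k : ℤ => (1 + (k:ℝ) ^ 2) ^ s * ‖φ k‖ ^ 2) →
        ∀ t ∈ Set.Icc (0:ℝ) T,
          hsNorm s (bilinearTerm β η φ t) ≤ C * (hsNorm s φ) ^ 2 :=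
  stmt15_general s β η T hs hη hT
end

section
/- Let η > 0, s ∈ (−1/2, 0), δ ∈ [0, s + 1/2), 0 < T ≤ 1, and let S(t) be the semigroup with symbol e^{(iβk|k|−η(k²−|k|))t}. If u : (0,T] → L²(𝕋) satisfies sup_{t∈(0,T]}(‖u(t)‖_{H^s} + t^{|s|/2}‖u(t)‖_{L²}) < ∞, then the map t ↦ ∫_0^t S(t−t') ∂_x(u(t')²) dt' is continuous from [0,T] into H^{s+δ}(𝕋). -/
/-- The k-th Fourier coefficient of the Duhamel term `∫_0^t S(t−t') ∂ₓ(u(t')²) dt'`. -/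
noncomputable def duhamelSq (β η : ℝ) (u : ℝ → ℤ → ℂ) (t : ℝ) (k : ℤ) : ℂ :=
  ∫ t' in Set.Ioo (0:ℝ) t,
    semigroupSymbol β η (t - t') k *
      (Complex.I * (k:ℝ) * ∑' j : ℤ, u t' j * u t' (k - j))

/-!
The Duhamel term is estimated one Fourier mode at a time. The hypothesis bounds
`‖u(t')‖²_{ℓ²}` by `C t'^{-|s|}`, hence the `k`-th coefficient of `∂ₓ(u²)` by `C |k| t'^{-|s|}`,
while the symbol is at most `e^{ηT} e^{-η(1+k²)r/2}` for `0 ≤ r ≤ T`. Splitting the time integral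
according to which of `t'`, `τ - t'` is smaller and comparing each half with a Gamma integral bounds
the `k`-th coefficient by `C |k| (1+k²)^{|s|-1}` uniformly in `τ ∈ [0,T]`; against the weight
`(1+k²)^{s+δ}` its square is summable exactly when `δ < s + 1/2`. Each coefficient is continuous
in `τ`, because `e^{z(τ-t')} = e^{zτ} e^{-zt'}` makes it a continuous function times a primitive,
and dominated convergence for the weighted series gives continuity in `H^{s+δ}`.
-/

open MeasureTheory Set Filter Topology

section Convolution

variable {G R : Type*} [AddGroup G] [NormedRing R]

lemma norm_mul_le_add_sq_div_two (x y : R) : ‖x * y‖ ≤ (‖x‖ ^ 2 + ‖y‖ ^ 2) / 2 := by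
  nlinarith [norm_mul_le x y, two_mul_le_add_sq ‖x‖ ‖y‖]

lemma summable_norm_mul_sub {a : G → R} (h : Summable fun j => ‖a j‖ ^ 2) (k : G) :
    Summable fun j => ‖a j * a (k - j)‖ :=
  .of_nonneg_of_le (fun _ => norm_nonneg _) (fun _ => norm_mul_le_add_sq_div_two _ _)
    ((h.add ((Equiv.subLeft k).summable_iff.mpr h)).div_const 2)

lemma norm_tsum_mul_sub_le {a : G → R} (h : Summable fun j => ‖a j‖ ^ 2) (k : G) :
    ‖∑' j, a j * a (k - j)‖ ≤ ∑' j, ‖a j‖ ^ 2 := by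
  have h' : Summable fun j => ‖a (k - j)‖ ^ 2 := (Equiv.subLeft k).summable_iff.mpr h
  calc ‖∑' j, a j * a (k - j)‖ ≤ ∑' j, ‖a j * a (k - j)‖ :=
        norm_tsum_le_tsum_norm (summable_norm_mul_sub h k)
    _ ≤ ∑' j, (‖a j‖ ^ 2 + ‖a (k - j)‖ ^ 2) / 2 :=
        (summable_norm_mul_sub h k).tsum_le_tsum (fun j => norm_mul_le_add_sq_div_two _ _)
          ((h.add h').div_const 2)
    _ = ∑' j, ‖a j‖ ^ 2 := by
        have := (Equiv.subLeft k).tsum_eq (fun j => ‖a j‖ ^ 2)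
        simp only [Equiv.subLeft_apply] at this
        rw [tsum_div_const, h.tsum_add h', this]
        ring

end Convolution

lemma integrableOn_rpow_neg_mul_exp_neg_mul {σ μ : ℝ} (hσ : σ < 1) (hμ : 0 < μ) :
    IntegrableOn (fun t : ℝ => t ^ (-σ) * Real.exp (-(μ * t))) (Ioi 0) := by
  simpa [neg_mul] using
    integrableOn_rpow_mul_exp_neg_mul_rpow (p := 1) (by linarith : -1 < -σ) one_pos hμ

lemma integral_Ioo_rpow_neg_mul_exp_neg_mul_le {σ μ : ℝ} (τ : ℝ) (hσ : σ < 1) (hμ : 0 < μ) :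
    ∫ t in Ioo 0 τ, t ^ (-σ) * Real.exp (-(μ * t)) ≤ (1 / μ) ^ (1 - σ) * Real.Gamma (1 - σ) := by
  have hΓ := Real.integral_rpow_mul_exp_neg_mul_Ioi (a := 1 - σ) (by linarith) hμ
  rw [show 1 - σ - 1 = -σ by ring] at hΓ
  rw [← hΓ]
  refine setIntegral_mono_set (integrableOn_rpow_neg_mul_exp_neg_mul hσ hμ) ?_
    (Ioo_subset_Ioi_self.eventuallyLE)
  filter_upwards [ae_restrict_mem measurableSet_Ioi] with t ht
  have := Real.rpow_nonneg ht.le (-σ)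
  positivity

lemma exp_mul_rpow_le_add {σ μ τ t : ℝ} (hσ : 0 ≤ σ) (hμ : 0 ≤ μ) (ht : t ∈ Ioo 0 τ) :
    Real.exp (-(μ * (τ - t))) * t ^ (-σ) ≤
      t ^ (-σ) * Real.exp (-(μ * t)) + (τ - t) ^ (-σ) * Real.exp (-(μ * (τ - t))) := by
  have h1 : 0 ≤ t ^ (-σ) * Real.exp (-(μ * t)) := by
    have := Real.rpow_nonneg ht.1.le (-σ); positivity
  have h2 : 0 ≤ (τ - t) ^ (-σ) * Real.exp (-(μ * (τ - t))) := by
    have := Real.rpow_nonneg (sub_pos.2 ht.2).le (-σ); positivity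
  rcases le_total t (τ - t) with h | h
  · have : Real.exp (-(μ * (τ - t))) ≤ Real.exp (-(μ * t)) := by
      gcongr
    nlinarith [Real.rpow_nonneg ht.1.le (-σ)]
  · have : t ^ (-σ) ≤ (τ - t) ^ (-σ) :=
      Real.rpow_le_rpow_of_nonpos (sub_pos.2 ht.2) h (by linarith)
    nlinarith [Real.exp_pos (-(μ * (τ - t)))]

lemma integral_Ioo_exp_mul_rpow_le {σ μ τ : ℝ} (hσ0 : 0 ≤ σ) (hσ1 : σ < 1) (hμ : 0 < μ)
    (hτ : 0 ≤ τ) :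
    ∫ t in Ioo 0 τ, Real.exp (-(μ * (τ - t))) * t ^ (-σ) ≤
      2 * ((1 / μ) ^ (1 - σ) * Real.Gamma (1 - σ)) := by
  set f : ℝ → ℝ := fun t => t ^ (-σ) * Real.exp (-(μ * t))
  have hf : IntegrableOn f (Ioo 0 τ) :=
    (integrableOn_rpow_neg_mul_exp_neg_mul hσ1 hμ).mono_set Ioo_subset_Ioi_self
  have hf_refl : IntegrableOn (fun t => f (τ - t)) (Ioo 0 τ) := by
    have := ((intervalIntegrable_iff_integrableOn_Ioo_of_le hτ).2 hf).comp_sub_left τ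
    rw [sub_zero, sub_self] at this
    exact (intervalIntegrable_iff_integrableOn_Ioo_of_le hτ).1 this.symm
  have h_refl : ∫ t in Ioo 0 τ, f (τ - t) = ∫ t in Ioo 0 τ, f t := by
    simp only [← integral_Ioc_eq_integral_Ioo, ← intervalIntegral.integral_of_le hτ]
    simp [intervalIntegral.integral_comp_sub_left f τ (a := 0) (b := τ)]
  calc ∫ t in Ioo 0 τ, Real.exp (-(μ * (τ - t))) * t ^ (-σ)
      ≤ ∫ t in Ioo 0 τ, (f t + f (τ - t)) := by
        refine integral_mono_of_nonneg ?_ (hf.add hf_refl) ?_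
        · filter_upwards [ae_restrict_mem measurableSet_Ioo] with t ht
          have := Real.rpow_nonneg ht.1.le (-σ)
          positivity
        · filter_upwards [ae_restrict_mem measurableSet_Ioo] with t ht
          exact exp_mul_rpow_le_add hσ0 hμ.le ht
    _ = 2 * ∫ t in Ioo 0 τ, f t := by rw [integral_add hf hf_refl, h_refl]; ring
    _ ≤ _ := by gcongr; exact integral_Ioo_rpow_neg_mul_exp_neg_mul_le τ hσ1 hμ

lemma integrableOn_exp_mul_rpow {σ μ τ : ℝ} (hσ : σ < 1) (hτ : 0 ≤ τ) :
    IntegrableOn (fun t : ℝ => Real.exp (-(μ * (τ - t))) * t ^ (-σ)) (Ioo 0 τ) := by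
  have h : IntegrableOn (fun t : ℝ => t ^ (-σ)) (Icc 0 τ) := by
    rw [integrableOn_Icc_iff_integrableOn_Ioc, ← intervalIntegrable_iff_integrableOn_Ioc_of_le hτ]
    exact intervalIntegral.intervalIntegrable_rpow' (by linarith)
  exact (h.continuousOn_mul (by fun_prop) isCompact_Icc).mono_set Ioo_subset_Icc_self

lemma norm_integral_Ioo_mul_le {S g : ℝ → ℂ} {A B μ σ τ : ℝ} (hA : 0 ≤ A) (hB : 0 ≤ B)
    (hσ0 : 0 ≤ σ) (hσ1 : σ < 1) (hμ : 0 < μ) (hτ : 0 ≤ τ)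
    (hS : ∀ r ∈ Ioo 0 τ, ‖S r‖ ≤ A * Real.exp (-(μ * r)))
    (hg : ∀ t ∈ Ioo 0 τ, ‖g t‖ ≤ B * t ^ (-σ)) :
    ‖∫ t in Ioo 0 τ, S (τ - t) * g t‖ ≤
      A * B * (2 * ((1 / μ) ^ (1 - σ) * Real.Gamma (1 - σ))) := by
  calc ‖∫ t in Ioo 0 τ, S (τ - t) * g t‖
      ≤ ∫ t in Ioo 0 τ, A * B * (Real.exp (-(μ * (τ - t))) * t ^ (-σ)) := by
        refine norm_integral_le_of_norm_le ((integrableOn_exp_mul_rpow hσ1 hτ).const_mul _) ?_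
        filter_upwards [ae_restrict_mem measurableSet_Ioo] with t ht
        have hSt := hS (τ - t) ⟨sub_pos.2 ht.2, by linarith [ht.1]⟩
        rw [norm_mul]
        calc ‖S (τ - t)‖ * ‖g t‖ ≤ A * Real.exp (-(μ * (τ - t))) * (B * t ^ (-σ)) :=
              mul_le_mul hSt (hg t ht) (norm_nonneg _) ((norm_nonneg _).trans hSt)
          _ = _ := by ring
    _ = A * B * ∫ t in Ioo 0 τ, Real.exp (-(μ * (τ - t))) * t ^ (-σ) := integral_const_mul _ _
    _ ≤ _ := by gcongr; exact integral_Ioo_exp_mul_rpow_le hσ0 hσ1 hμ hτ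

lemma continuousOn_integral_Ioo_exp_mul {g : ℝ → ℂ} {T : ℝ} (z : ℂ) (hT : 0 ≤ T)
    (hg : IntegrableOn g (Ioc 0 T)) :
    ContinuousOn (fun τ : ℝ => ∫ t in Ioo 0 τ, Complex.exp (z * ↑(τ - t)) * g t) (Icc 0 T) := by
  have hint : IntervalIntegrable (fun t : ℝ => Complex.exp (-z * t) * g t) volume 0 T := by
    rw [intervalIntegrable_iff_integrableOn_Ioc_of_le hT]
    rw [← integrableOn_Icc_iff_integrableOn_Ioc] at hg ⊢
    exact hg.continuousOn_mul (by fun_prop) isCompact_Icc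
  have hprim := intervalIntegral.continuousOn_primitive_interval' hint left_mem_uIcc
  rw [uIcc_of_le hT] at hprim
  have hexp : Continuous fun τ : ℝ => Complex.exp (z * τ) := by fun_prop
  refine (hexp.continuousOn.mul hprim).congr fun τ hτ => ?_
  rw [Pi.mul_apply, intervalIntegral.integral_of_le hτ.1, integral_Ioc_eq_integral_Ioo,
    ← integral_const_mul]
  refine setIntegral_congr_fun measurableSet_Ioo fun t _ => ?_
  rw [← mul_assoc, ← Complex.exp_add]
  push_cast
  ring_nf

lemma summable_one_add_sq_rpow {r : ℝ} (hr : r < -(1 / 2)) :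
    Summable fun k : ℤ => (1 + (k : ℝ) ^ 2) ^ r := by
  refine Summable.of_norm_bounded_eventually (Real.summable_abs_int_rpow (b := -(2 * r))
    (by linarith)) ?_
  filter_upwards [eventually_cofinite_ne 0] with k hk
  have hk2 : 0 < (k : ℝ) ^ 2 := by positivity
  rw [Real.norm_of_nonneg (by positivity), neg_neg, Real.rpow_mul (abs_nonneg _),
    Real.rpow_two, sq_abs]
  exact Real.rpow_le_rpow_of_nonpos hk2 (by linarith) (by linarith)

lemma summable_one_add_sq_rpow_mul_sq {r σ C : ℝ} (h : r + 2 * σ - 1 < -(1 / 2)) :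
    Summable fun k : ℤ =>
      (1 + (k : ℝ) ^ 2) ^ r * (C * |(k : ℝ)| * (1 + (k : ℝ) ^ 2) ^ (σ - 1)) ^ 2 := by
  refine .of_nonneg_of_le (fun k => by positivity) (fun k => ?_)
    ((summable_one_add_sq_rpow h).mul_left (C ^ 2))
  have hw : 0 < 1 + (k : ℝ) ^ 2 := by positivity
  calc (1 + (k : ℝ) ^ 2) ^ r * (C * |(k : ℝ)| * (1 + (k : ℝ) ^ 2) ^ (σ - 1)) ^ 2
      = C ^ 2 * ((k : ℝ) ^ 2 * (1 + (k : ℝ) ^ 2) ^ (r + 2 * σ - 2)) := by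
        rw [mul_pow, mul_pow, sq_abs, ← Real.rpow_mul_natCast hw.le,
          show r + 2 * σ - 2 = r + (σ - 1) * (2 : ℕ) by push_cast; ring, Real.rpow_add hw]
        ring
    _ ≤ C ^ 2 * ((1 + (k : ℝ) ^ 2) * (1 + (k : ℝ) ^ 2) ^ (r + 2 * σ - 2)) := by
        gcongr; linarith
    _ = C ^ 2 * (1 + (k : ℝ) ^ 2) ^ (r + 2 * σ - 1) := by
        rw [mul_comm (1 + _), ← Real.rpow_add_one hw.ne']; ring_nf

lemma hsNorm_nonneg (r : ℝ) (f : ℤ → ℂ) : 0 ≤ hsNorm r f := Real.sqrt_nonneg _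

lemma tendsto_hsNorm_sub_of_dominated {α : Type*} {l : Filter α} {F : α → ℤ → ℂ} {G : ℤ → ℂ}
    {b : ℤ → ℝ} {r : ℝ} (hF : ∀ k, Tendsto (fun x => F x k) l (𝓝 (G k)))
    (hFb : ∀ᶠ x in l, ∀ k, ‖F x k‖ ≤ b k) (hGb : ∀ k, ‖G k‖ ≤ b k)
    (hb : Summable fun k : ℤ => (1 + (k : ℝ) ^ 2) ^ r * b k ^ 2) :
    Tendsto (fun x => hsNorm r fun k => F x k - G k) l (𝓝 0) := by
  have hsum : Tendsto (fun x => ∑' k : ℤ, (1 + (k : ℝ) ^ 2) ^ r * ‖F x k - G k‖ ^ 2) l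
      (𝓝 (∑' k : ℤ, (0 : ℝ))) := by
    refine tendsto_tsum_of_dominated_convergence (hb.mul_left 4) (fun k => ?_) ?_
    · simpa using (((hF k).sub_const (G k)).norm.pow 2).const_mul ((1 + (k : ℝ) ^ 2) ^ r)
    · filter_upwards [hFb] with x hx k
      have hd : ‖F x k - G k‖ ≤ 2 * b k := by linarith [norm_sub_le (F x k) (G k), hx k, hGb k]
      rw [Real.norm_of_nonneg (by positivity)]
      calc (1 + (k : ℝ) ^ 2) ^ r * ‖F x k - G k‖ ^ 2 ≤ (1 + (k : ℝ) ^ 2) ^ r * (2 * b k) ^ 2 := by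
            gcongr
        _ = 4 * ((1 + (k : ℝ) ^ 2) ^ r * b k ^ 2) := by ring
  simpa [hsNorm] using (hsum.const_mul (2 * Real.pi)).sqrt

/-- The decay rate `η (k² - |k|)` vanishes at `k = 0, ±1`; the factor `exp (η T)` buys the rate
`η (1 + k²) / 2`, since `k² - |k| + 1 ≥ (1 + k²) / 2`. -/
lemma norm_semigroupSymbol_le (β : ℝ) {η T r : ℝ} (k : ℤ) (hη : 0 ≤ η) (hr : r ∈ Icc 0 T) :
    ‖semigroupSymbol β η r k‖ ≤
      Real.exp (η * T) * Real.exp (-(η / 2 * (1 + (k : ℝ) ^ 2) * r)) := by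
  rw [semigroupSymbol, Complex.norm_exp, ← Real.exp_add]
  refine Real.exp_le_exp.2 ?_
  simp only [Complex.mul_re, Complex.sub_re, Complex.mul_im, Complex.sub_im, Complex.I_re,
    Complex.I_im, Complex.ofReal_re, Complex.ofReal_im]
  rw [← sq_abs (k : ℝ)]
  nlinarith [mul_nonneg (mul_nonneg hη hr.1) (sq_nonneg (|(k : ℝ)| - 1)),
    mul_le_mul_of_nonneg_left hr.2 hη]

lemma tsum_norm_sq_le_of_rpow_mul_l2Norm_le {f : ℤ → ℂ} {t σ M : ℝ} (ht : 0 < t)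
    (h : t ^ (σ / 2) * l2Norm f ≤ M) :
    ∑' j, ‖f j‖ ^ 2 ≤ M ^ 2 / (2 * Real.pi) * t ^ (-σ) := by
  have hl2 : l2Norm f ≤ M * t ^ (-(σ / 2)) := by
    rw [Real.rpow_neg ht.le, ← div_eq_mul_inv, le_div_iff₀ (Real.rpow_pos_of_pos ht _)]
    linarith
  have hsq := (Real.sqrt_le_iff.1 hl2).2
  rw [mul_pow, ← Real.rpow_mul_natCast ht.le, show -(σ / 2) * ((2 : ℕ) : ℝ) = -σ by ring] at hsq
  rw [div_mul_eq_mul_div, le_div_iff₀ Real.two_pi_pos]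
  linarith

lemma norm_mul_tsum_mul_sub_le {a : ℤ → ℂ} (h : Summable fun j => ‖a j‖ ^ 2) (k : ℤ) :
    ‖Complex.I * (k : ℝ) * ∑' j, a j * a (k - j)‖ ≤ |(k : ℝ)| * ∑' j, ‖a j‖ ^ 2 := by
  rw [norm_mul, norm_mul, Complex.norm_I, one_mul, Complex.norm_real, Real.norm_eq_abs]
  gcongr
  exact norm_tsum_mul_sub_le h k

lemma integrableOn_Ioc_of_norm_le_rpow {g : ℝ → ℂ} {B σ T : ℝ}
    (hg : AEStronglyMeasurable g (volume.restrict (Ioc 0 T))) (hσ : σ < 1)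
    (h : ∀ t ∈ Ioc 0 T, ‖g t‖ ≤ B * t ^ (-σ)) : IntegrableOn g (Ioc 0 T) :=
  Integrable.mono' ((intervalIntegral.intervalIntegrable_rpow' (a := 0) (b := T)
    (by linarith : -1 < -σ)).1.const_mul B) hg (ae_restrict_of_forall_mem measurableSet_Ioc h)

lemma norm_duhamelSq_le (β : ℝ) {η σ T K : ℝ} {u : ℝ → ℤ → ℂ} (hη : 0 < η) (hσ0 : 0 ≤ σ)
    (hσ1 : σ < 1) (hK : 0 ≤ K) (k : ℤ)
    (hu : ∀ t ∈ Ioc 0 T,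
      ‖Complex.I * (k : ℝ) * ∑' j, u t j * u t (k - j)‖ ≤ |(k : ℝ)| * K * t ^ (-σ)) :
    ∀ τ ∈ Icc 0 T, ‖duhamelSq β η u τ k‖ ≤
      Real.exp (η * T) * K * (2 * ((2 / η) ^ (1 - σ) * Real.Gamma (1 - σ))) * |(k : ℝ)| *
        (1 + (k : ℝ) ^ 2) ^ (σ - 1) := by
  intro τ hτ
  have hw : 0 < 1 + (k : ℝ) ^ 2 := by positivity
  have hbound := norm_integral_Ioo_mul_le (Real.exp_pos (η * T)).le
    (mul_nonneg (abs_nonneg (k : ℝ)) hK) hσ0 hσ1 (by positivity : 0 < η / 2 * (1 + (k : ℝ) ^ 2))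
    hτ.1 (fun r hr => norm_semigroupSymbol_le β k hη.le ⟨hr.1.le, hr.2.le.trans hτ.2⟩)
    (fun t ht => hu t ⟨ht.1, ht.2.le.trans hτ.2⟩)
  have hrate : (1 / (η / 2 * (1 + (k : ℝ) ^ 2))) ^ (1 - σ) =
      (2 / η) ^ (1 - σ) * (1 + (k : ℝ) ^ 2) ^ (σ - 1) := by
    rw [show 1 / (η / 2 * (1 + (k : ℝ) ^ 2)) = 2 / η * (1 + (k : ℝ) ^ 2)⁻¹ by field_simp,
      Real.mul_rpow (by positivity) (by positivity), Real.inv_rpow hw.le, ← Real.rpow_neg hw.le,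
      neg_sub]
  refine hbound.trans_eq ?_
  rw [hrate]
  ring

theorem stmt19_general (β η s δ T : ℝ) (hη : 0 < η) (hs : s ∈ Set.Ioo (-(1/2) : ℝ) 0)
    (hδ : δ ∈ Set.Ico (0:ℝ) (s + 1/2)) (hT0 : 0 < T)
    (u : ℝ → ℤ → ℂ)
    (hmeas : ∀ k : ℤ, Measurable fun t : ℝ => u t k)
    (hL2 : ∀ t ∈ Set.Ioc (0:ℝ) T, Summable fun k : ℤ => ‖u t k‖ ^ 2)
    (hbdd : ∃ M : ℝ, ∀ t ∈ Set.Ioc (0:ℝ) T,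
      hsNorm s (u t) + t ^ (|s| / 2) * l2Norm (u t) ≤ M) :
    ∀ t ∈ Set.Icc (0:ℝ) T, ∀ ε > (0:ℝ), ∃ ρ > (0:ℝ), ∀ τ ∈ Set.Icc (0:ℝ) T,
      |τ - t| < ρ →
        hsNorm (s + δ) (fun k => duhamelSq β η u τ k - duhamelSq β η u t k) < ε := by
  obtain ⟨M, hM⟩ := hbdd
  have hs_abs : |s| = -s := abs_of_neg hs.2
  have hσ1 : |s| < 1 := by linarith [hs.1]
  have hg : ∀ k : ℤ, ∀ t ∈ Ioc 0 T, ‖Complex.I * (k : ℝ) * ∑' j, u t j * u t (k - j)‖ ≤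
      |(k : ℝ)| * (M ^ 2 / (2 * Real.pi)) * t ^ (-|s|) := fun k t ht => by
    have hl2 : t ^ (|s| / 2) * l2Norm (u t) ≤ M := by
      linarith [hM t ht, hsNorm_nonneg s (u t)]
    refine (norm_mul_tsum_mul_sub_le (hL2 t ht) k).trans ?_
    rw [mul_assoc]
    gcongr
    exact tsum_norm_sq_le_of_rpow_mul_l2Norm_le ht.1 hl2
  have hcont : ∀ k : ℤ, ContinuousOn (fun τ => duhamelSq β η u τ k) (Icc 0 T) := fun k =>
    continuousOn_integral_Ioo_exp_mul _ hT0.le <| integrableOn_Ioc_of_norm_le_rpow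
      (measurable_const.mul (.tsum fun j => (hmeas j).mul (hmeas (k - j)))).aestronglyMeasurable
      hσ1 (hg k)
  have hbound := fun k => norm_duhamelSq_le β hη (abs_nonneg s) hσ1 (by positivity) k (hg k)
  intro t ht ε hε
  have hconv := tendsto_hsNorm_sub_of_dominated (fun k => (hcont k t ht).tendsto)
    (eventually_nhdsWithin_of_forall fun τ hτ k => hbound k τ hτ) (fun k => hbound k t ht)
    (summable_one_add_sq_rpow_mul_sq (r := s + δ) (σ := |s|) (by rw [hs_abs]; linarith [hδ.2]))
  obtain ⟨ρ, hρ, hclose⟩ := Metric.tendsto_nhdsWithin_nhds.1 hconv ε hε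
  refine ⟨ρ, hρ, fun τ hτ hτt => ?_⟩
  simpa [Real.dist_eq, abs_of_nonneg (hsNorm_nonneg _ _)] using hclose hτ (by rwa [Real.dist_eq])

/-- Let η > 0, s ∈ (−1/2, 0), δ ∈ [0, s + 1/2), 0 < T ≤ 1. If
`u : (0,T] → L²(𝕋)` satisfies `sup_{t∈(0,T]} (‖u(t)‖_{H^s} + t^{|s|/2}‖u(t)‖_{L²}) < ∞`,
then `t ↦ ∫_0^t S(t−t') ∂ₓ(u(t')²) dt'` is continuous from [0,T] into H^{s+δ}(𝕋). -/
theorem stmt19 (β η s δ T : ℝ) (hη : 0 < η) (hs : s ∈ Set.Ioo (-(1/2) : ℝ) 0)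
    (hδ : δ ∈ Set.Ico (0:ℝ) (s + 1/2)) (hT0 : 0 < T) (hT1 : T ≤ 1)
    (u : ℝ → ℤ → ℂ)
    (hmeas : ∀ k : ℤ, Measurable fun t : ℝ => u t k)
    (hL2 : ∀ t ∈ Set.Ioc (0:ℝ) T, Summable fun k : ℤ => ‖u t k‖ ^ 2)
    (hbdd : ∃ M : ℝ, ∀ t ∈ Set.Ioc (0:ℝ) T,
      hsNorm s (u t) + t ^ (|s| / 2) * l2Norm (u t) ≤ M) :
    ∀ t ∈ Set.Icc (0:ℝ) T, ∀ ε > (0:ℝ), ∃ ρ > (0:ℝ), ∀ τ ∈ Set.Icc (0:ℝ) T,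
      |τ - t| < ρ →
        hsNorm (s + δ) (fun k => duhamelSq β η u τ k - duhamelSq β η u t k) < ε :=
  stmt19_general β η s δ T hη hs hδ hT0 u hmeas hL2 hbdd
end
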